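/- arXiv:1709.00285 — 5 statements merged into one kernel-verified Lean document; each statement's English description precedes it below -/
import Mathlib

section
/- Suppose a mixed 1-stack 1-queue layout of G_c has vertices v_1 < s < t < v_2, where s, t is a twin pair and the edge (v_1, v_2) belongs to the queue Q. Then there exist three distinct connectors x_1, x_2, x_3 ∈ C_{s,t} such that either v_2 < x_1, x_2, x_3 or x_1, x_2, x_3 < v_1; equivalently, at most two connectors of the pair s, t lie strictly between v_1 and v_2 in the order. -/
/-- The vertices of the counterexample graph `G_c`: vertices `A`, `B`,
twins `s i`, `t i` for `i : Fin 19`, and connectors `x i j` for `j : Fin 7`. -/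
inductive GcV : Type
  | A : GcV
  | B : GcV
  | s : Fin 19 → GcV
  | t : Fin 19 → GcV
  | x : Fin 19 → Fin 7 → GcV
  deriving DecidableEq

/-- The edge set of the counterexample graph `G_c` (361 edges). -/
def GcEdges : Set (Sym2 GcV) :=
  {e | ∃ i : Fin 19,
    e = s(GcV.s i, GcV.t i) ∨
    e = s(GcV.A, GcV.s i) ∨ e = s(GcV.A, GcV.t i) ∨
    e = s(GcV.B, GcV.s i) ∨ e = s(GcV.B, GcV.t i) ∨
    ∃ j : Fin 7, e = s(GcV.s i, GcV.x i j) ∨ e = s(GcV.t i, GcV.x i j)}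

/-- Two edges cross with respect to the vertex positions `pos`:
`L(e) < L(f) < R(e) < R(f)`. -/
def crossesAt (pos : GcV → ℕ) (e f : Sym2 GcV) : Prop :=
  ∃ a b c d : GcV, e = s(a, c) ∧ f = s(b, d) ∧
    pos a < pos b ∧ pos b < pos c ∧ pos c < pos d

/-- Two edges nest with respect to the vertex positions `pos`:
`L(e) < L(f) < R(f) < R(e)`. -/
def nestsAt (pos : GcV → ℕ) (e f : Sym2 GcV) : Prop :=
  ∃ a b c d : GcV, e = s(a, d) ∧ f = s(b, c) ∧
    pos a < pos b ∧ pos b < pos c ∧ pos c < pos d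

/-- A mixed 1-stack 1-queue layout of `G_c`: a linear order of the vertices
(given by an injective position function) and a partition of the edges into
a stack `S` (no two edges cross) and a queue `Q` (no two edges nest). -/
structure GcMixedLayout where
  pos : GcV → ℕ
  inj : Function.Injective pos
  S : Set (Sym2 GcV)
  Q : Set (Sym2 GcV)
  union_eq : S ∪ Q = GcEdges
  disjoint : Disjoint S Q
  stack : ∀ e ∈ S, ∀ f ∈ S, ¬ crossesAt pos e f
  queue : ∀ e ∈ Q, ∀ f ∈ Q, ¬ nestsAt pos e f

lemma mem_edges_sx (i : Fin 19) (j : Fin 7) : s(GcV.s i, GcV.x i j) ∈ GcEdges :=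
  ⟨i, Or.inr <| Or.inr <| Or.inr <| Or.inr <| Or.inr ⟨j, Or.inl rfl⟩⟩

lemma mem_edges_tx (i : Fin 19) (j : Fin 7) : s(GcV.t i, GcV.x i j) ∈ GcEdges :=
  ⟨i, Or.inr <| Or.inr <| Or.inr <| Or.inr <| Or.inr ⟨j, Or.inr rfl⟩⟩

lemma connector_adj {i : Fin 19} {j : Fin 7} {w : GcV}
    (h : s(GcV.x i j, w) ∈ GcEdges) : w = GcV.s i ∨ w = GcV.t i := by
  obtain ⟨i', h⟩ := h
  rcases h with h|h|h|h|h|⟨j', h|h⟩ <;> rw [Sym2.eq_iff] at h <;>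
    rcases h with ⟨h1, h2⟩|⟨h1, h2⟩ <;> simp_all

lemma mem_S_of (L : GcMixedLayout) {v₁ v₂ a b : GcV} (hq : s(v₁, v₂) ∈ L.Q)
    (he : s(a, b) ∈ GcEdges) (h1 : L.pos v₁ < L.pos a) (h2 : L.pos a < L.pos b)
    (h3 : L.pos b < L.pos v₂) : s(a, b) ∈ L.S := by
  have h' : s(a, b) ∈ L.S ∪ L.Q := by rw [L.union_eq]; exact he
  rcases h' with h' | h'
  · exact h'
  · exact absurd ⟨v₁, a, b, v₂, rfl, rfl, h1, h2, h3⟩ (L.queue _ hq _ h')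

lemma mem_S_of' (L : GcMixedLayout) {v₁ v₂ a b : GcV} (hq : s(v₁, v₂) ∈ L.Q)
    (he : s(a, b) ∈ GcEdges) (ha1 : L.pos v₁ < L.pos a) (ha2 : L.pos a < L.pos v₂)
    (hb1 : L.pos v₁ < L.pos b) (hb2 : L.pos b < L.pos v₂)
    (hab : L.pos a ≠ L.pos b) : s(a, b) ∈ L.S := by
  rcases hab.lt_or_gt with h | h
  · exact mem_S_of L hq he ha1 h hb2
  · rw [Sym2.eq_swap] at he ⊢
    exact mem_S_of L hq he hb1 h ha2

lemma no_cross (L : GcMixedLayout) {a b c d : GcV} (he : s(a, c) ∈ L.S)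
    (hf : s(b, d) ∈ L.S) (h1 : L.pos a < L.pos b) (h2 : L.pos b < L.pos c)
    (h3 : L.pos c < L.pos d) : False :=
  L.stack _ he _ hf ⟨a, b, c, d, rfl, rfl, h1, h2, h3⟩

/-- Region of connector `j` relative to `sv, tv`. -/
def rgAux (L : GcMixedLayout) (i : Fin 19) (sv tv : GcV) (j : Fin 7) : ℕ :=
  if L.pos (GcV.x i j) < L.pos sv then 0
  else if L.pos (GcV.x i j) < L.pos tv then 1 else 2

lemma Gc_key (L : GcMixedLayout) (i : Fin 19) (sv tv v₁ v₂ : GcV)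
    (hEsv : ∀ j, s(sv, GcV.x i j) ∈ GcEdges) (hEtv : ∀ j, s(tv, GcV.x i j) ∈ GcEdges)
    (hxsv : ∀ j, L.pos (GcV.x i j) ≠ L.pos sv) (hxtv : ∀ j, L.pos (GcV.x i j) ≠ L.pos tv)
    (h1 : L.pos v₁ < L.pos sv) (h2 : L.pos sv < L.pos tv) (h3 : L.pos tv < L.pos v₂)
    (hq : s(v₁, v₂) ∈ L.Q) (j₁ j₂ : Fin 7)
    (m₁ : L.pos v₁ < L.pos (GcV.x i j₁) ∧ L.pos (GcV.x i j₁) < L.pos v₂)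
    (m₂ : L.pos v₁ < L.pos (GcV.x i j₂) ∧ L.pos (GcV.x i j₂) < L.pos v₂)
    (hlt : L.pos (GcV.x i j₁) < L.pos (GcV.x i j₂)) :
    rgAux L i sv tv j₂ = rgAux L i sv tv j₁ + 1 := by
  have hsv1 : L.pos v₁ < L.pos sv := h1
  have hsv2 : L.pos sv < L.pos v₂ := h2.trans h3
  have htv1 : L.pos v₁ < L.pos tv := h1.trans h2
  have htv2 : L.pos tv < L.pos v₂ := h3
  have eS1 : s(sv, GcV.x i j₁) ∈ L.S :=
    mem_S_of' L hq (hEsv j₁) hsv1 hsv2 m₁.1 m₁.2 (hxsv j₁).symm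
  have eS2 : s(sv, GcV.x i j₂) ∈ L.S :=
    mem_S_of' L hq (hEsv j₂) hsv1 hsv2 m₂.1 m₂.2 (hxsv j₂).symm
  have eT1 : s(tv, GcV.x i j₁) ∈ L.S :=
    mem_S_of' L hq (hEtv j₁) htv1 htv2 m₁.1 m₁.2 (hxtv j₁).symm
  have eT2 : s(tv, GcV.x i j₂) ∈ L.S :=
    mem_S_of' L hq (hEtv j₂) htv1 htv2 m₂.1 m₂.2 (hxtv j₂).symm
  have eS1' : s(GcV.x i j₁, sv) ∈ L.S := by rw [Sym2.eq_swap]; exact eS1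
  have eT1' : s(GcV.x i j₁, tv) ∈ L.S := by rw [Sym2.eq_swap]; exact eT1
  have eT2' : s(GcV.x i j₂, tv) ∈ L.S := by rw [Sym2.eq_swap]; exact eT2
  unfold rgAux
  split_ifs with c1 c2 c3 c4 c5 c6
  · -- x₁ < x₂ < sv : both in region 0
    exact no_cross L eS1' eT2' hlt c1 h2
  · omega
  · -- both in region 1 : sv < x₁ < x₂ < tv
    exfalso
    have hx1 : L.pos sv < L.pos (GcV.x i j₁) := by have := hxsv j₁; omega
    exact no_cross L eS2 eT1' hx1 hlt c2
  · omega
  · -- x₁ in region 0, x₂ in region 2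
    exfalso
    have hx2 : L.pos tv < L.pos (GcV.x i j₂) := by have := hxtv j₂; omega
    exact no_cross L eT1' eS2 c5 h2 hx2
  · omega
  · -- both in region 2 : tv < x₁ < x₂
    exfalso
    have hx1 : L.pos tv < L.pos (GcV.x i j₁) := by have := hxtv j₁; omega
    exact no_cross L eS1 eT2 h2 hx1 hlt

/-- If a mixed layout of `G_c` has `v₁ < s < t < v₂` for a twin pair
`s, t` with `(v₁, v₂)` a queue edge, then three distinct connectors of the pair lie
entirely after `v₂` or entirely before `v₁`. -/
theorem Gc_lemma_RR1 (L : GcMixedLayout) (i : Fin 19) (sv tv v₁ v₂ : GcV)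
    (hst : (sv = GcV.s i ∧ tv = GcV.t i) ∨ (sv = GcV.t i ∧ tv = GcV.s i))
    (h1 : L.pos v₁ < L.pos sv) (h2 : L.pos sv < L.pos tv) (h3 : L.pos tv < L.pos v₂)
    (hq : s(v₁, v₂) ∈ L.Q) :
    ∃ j₁ j₂ j₃ : Fin 7, j₁ ≠ j₂ ∧ j₁ ≠ j₃ ∧ j₂ ≠ j₃ ∧
      ((L.pos v₂ < L.pos (GcV.x i j₁) ∧ L.pos v₂ < L.pos (GcV.x i j₂) ∧
          L.pos v₂ < L.pos (GcV.x i j₃)) ∨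
        (L.pos (GcV.x i j₁) < L.pos v₁ ∧ L.pos (GcV.x i j₂) < L.pos v₁ ∧
          L.pos (GcV.x i j₃) < L.pos v₁)) := by
  classical
  have hQE : s(v₁, v₂) ∈ GcEdges := by
    rw [← L.union_eq]; exact Or.inr hq
  have hsv : sv = GcV.s i ∨ sv = GcV.t i := by
    rcases hst with ⟨h, _⟩ | ⟨h, _⟩
    · exact Or.inl h
    · exact Or.inr h
  have htv : tv = GcV.s i ∨ tv = GcV.t i := by
    rcases hst with ⟨_, h⟩ | ⟨_, h⟩
    · exact Or.inr h
    · exact Or.inl h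
  have hEsv : ∀ j, s(sv, GcV.x i j) ∈ GcEdges := by
    intro j
    rcases hsv with h | h <;> rw [h]
    · exact mem_edges_sx i j
    · exact mem_edges_tx i j
  have hEtv : ∀ j, s(tv, GcV.x i j) ∈ GcEdges := by
    intro j
    rcases htv with h | h <;> rw [h]
    · exact mem_edges_sx i j
    · exact mem_edges_tx i j
  have hxsv : ∀ j, L.pos (GcV.x i j) ≠ L.pos sv := by
    intro j h
    have hx := L.inj h
    rcases hsv with h' | h' <;> rw [h'] at hx <;> simp at hx
  have hxtv : ∀ j, L.pos (GcV.x i j) ≠ L.pos tv := by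
    intro j h
    have hx := L.inj h
    rcases htv with h' | h' <;> rw [h'] at hx <;> simp at hx
  have hxv₁ : ∀ j, L.pos (GcV.x i j) ≠ L.pos v₁ := by
    intro j h
    have hx : v₁ = GcV.x i j := (L.inj h).symm
    rw [hx] at hQE
    rcases connector_adj hQE with h' | h' <;> rcases hst with ⟨ha, hb⟩ | ⟨ha, hb⟩ <;>
      subst ha <;> subst hb <;> rw [h'] at h3 <;> omega
  have hxv₂ : ∀ j, L.pos (GcV.x i j) ≠ L.pos v₂ := by
    intro j h
    have hx : v₂ = GcV.x i j := (L.inj h).symm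
    rw [hx, Sym2.eq_swap] at hQE
    rcases connector_adj hQE with h' | h' <;> rcases hst with ⟨ha, hb⟩ | ⟨ha, hb⟩ <;>
      subst ha <;> subst hb <;> rw [h'] at h1 <;> omega
  have hpxne : ∀ j₁ j₂ : Fin 7, j₁ ≠ j₂ → L.pos (GcV.x i j₁) ≠ L.pos (GcV.x i j₂) := by
    intro j₁ j₂ h hh
    have := L.inj hh
    injection this with _ h2'
    exact h h2'
  -- no three connectors strictly inside (v₁, v₂)
  have no3 : ∀ j₁ j₂ j₃ : Fin 7, j₁ ≠ j₂ → j₁ ≠ j₃ → j₂ ≠ j₃ →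
      (L.pos v₁ < L.pos (GcV.x i j₁) ∧ L.pos (GcV.x i j₁) < L.pos v₂) →
      (L.pos v₁ < L.pos (GcV.x i j₂) ∧ L.pos (GcV.x i j₂) < L.pos v₂) →
      (L.pos v₁ < L.pos (GcV.x i j₃) ∧ L.pos (GcV.x i j₃) < L.pos v₂) → False := by
    intro a b c hab hac hbc ma mb mc
    have k : ∀ p q : Fin 7,
        (L.pos v₁ < L.pos (GcV.x i p) ∧ L.pos (GcV.x i p) < L.pos v₂) →
        (L.pos v₁ < L.pos (GcV.x i q) ∧ L.pos (GcV.x i q) < L.pos v₂) → p ≠ q →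
        rgAux L i sv tv q = rgAux L i sv tv p + 1 ∨
        rgAux L i sv tv p = rgAux L i sv tv q + 1 := by
      intro p q mp mq hpq
      rcases (hpxne p q hpq).lt_or_gt with h | h
      · exact Or.inl (Gc_key L i sv tv v₁ v₂ hEsv hEtv hxsv hxtv h1 h2 h3 hq p q mp mq h)
      · exact Or.inr (Gc_key L i sv tv v₁ v₂ hEsv hEtv hxsv hxtv h1 h2 h3 hq q p mq mp h)
    rcases k a b ma mb hab with k1 | k1 <;> rcases k a c ma mc hac with k2 | k2 <;>
      rcases k b c mb mc hbc with k3 | k3 <;> omega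
  -- pigeonhole
  let Lf : Finset (Fin 7) := Finset.univ.filter fun j => L.pos (GcV.x i j) < L.pos v₁
  let Mf : Finset (Fin 7) := Finset.univ.filter fun j =>
    L.pos v₁ < L.pos (GcV.x i j) ∧ L.pos (GcV.x i j) < L.pos v₂
  let Rf : Finset (Fin 7) := Finset.univ.filter fun j => L.pos v₂ < L.pos (GcV.x i j)
  have hcover : ∀ j : Fin 7, j ∈ Lf ∪ Mf ∪ Rf := by
    intro j
    simp only [Lf, Mf, Rf, Finset.mem_union, Finset.mem_filter, Finset.mem_univ, true_and]
    have := hxv₁ j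
    have := hxv₂ j
    omega
  have hM2 : Mf.card ≤ 2 := by
    by_contra hcon
    push_neg at hcon
    obtain ⟨a, b, c, ha, hb, hc, hab, hac, hbc⟩ := Finset.two_lt_card_iff.mp hcon
    exact no3 a b c hab hac hbc (Finset.mem_filter.mp ha).2 (Finset.mem_filter.mp hb).2
      (Finset.mem_filter.mp hc).2
  have h7 : 7 ≤ Lf.card + Mf.card + Rf.card := by
    have e1 : (Finset.univ : Finset (Fin 7)).card = 7 := by simp
    have e2 : (Finset.univ : Finset (Fin 7)).card ≤ (Lf ∪ Mf ∪ Rf).card :=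
      Finset.card_le_card fun j _ => hcover j
    have e3 : (Lf ∪ Mf ∪ Rf).card ≤ (Lf ∪ Mf).card + Rf.card := Finset.card_union_le _ _
    have e4 : (Lf ∪ Mf).card ≤ Lf.card + Mf.card := Finset.card_union_le _ _
    omega
  have hor : 2 < Rf.card ∨ 2 < Lf.card := by omega
  rcases hor with hcard | hcard
  · obtain ⟨a, b, c, ha, hb, hc, hab, hac, hbc⟩ := Finset.two_lt_card_iff.mp hcard
    exact ⟨a, b, c, hab, hac, hbc, Or.inl ⟨(Finset.mem_filter.mp ha).2,
      (Finset.mem_filter.mp hb).2, (Finset.mem_filter.mp hc).2⟩⟩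
  · obtain ⟨a, b, c, ha, hb, hc, hab, hac, hbc⟩ := Finset.two_lt_card_iff.mp hcard
    exact ⟨a, b, c, hab, hac, hbc, Or.inr ⟨(Finset.mem_filter.mp ha).2,
      (Finset.mem_filter.mp hb).2, (Finset.mem_filter.mp hc).2⟩⟩
end

section
/- Suppose a mixed 1-stack 1-queue layout of G_c has vertices v_1 < s < t < v_2, where s, t is a twin pair and the edge (v_1, v_2) belongs to the queue Q. Then there exists a connector x ∈ C_{s,t} with x < v_1 or v_2 < x such that exactly one of the edges (s, x), (t, x) belongs to the stack S and the other belongs to the queue Q. -/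
lemma GcMixedLayout.swapS (L : GcMixedLayout) {a b : GcV} (h : s(a, b) ∈ L.S) :
    s(b, a) ∈ L.S := by rwa [Sym2.eq_swap]

lemma GcMixedLayout.swapQ (L : GcMixedLayout) {a b : GcV} (h : s(a, b) ∈ L.Q) :
    s(b, a) ∈ L.Q := by rwa [Sym2.eq_swap]

lemma GcMixedLayout.noCross (L : GcMixedLayout) {a b c d : GcV}
    (h1 : L.pos a < L.pos b) (h2 : L.pos b < L.pos c) (h3 : L.pos c < L.pos d)
    (he : s(a, c) ∈ L.S) (hf : s(b, d) ∈ L.S) : False :=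
  L.stack _ he _ hf ⟨a, b, c, d, rfl, rfl, h1, h2, h3⟩

lemma GcMixedLayout.noNest (L : GcMixedLayout) {a b c d : GcV}
    (h1 : L.pos a < L.pos b) (h2 : L.pos b < L.pos c) (h3 : L.pos c < L.pos d)
    (he : s(a, d) ∈ L.Q) (hf : s(b, c) ∈ L.Q) : False :=
  L.queue _ he _ hf ⟨a, b, c, d, rfl, rfl, h1, h2, h3⟩


/-- If a mixed layout of `G_c` has `v₁ < s < t < v₂` for a twin pair
`s, t` with `(v₁, v₂)` a queue edge, then some connector `x` of the pair with
`x < v₁` or `v₂ < x` is incident to exactly one stack edge and one queue edge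
among `(s, x)` and `(t, x)`. -/
theorem Gc_lemma_RR2 (L : GcMixedLayout) (i : Fin 19) (sv tv v₁ v₂ : GcV)
    (hst : (sv = GcV.s i ∧ tv = GcV.t i) ∨ (sv = GcV.t i ∧ tv = GcV.s i))
    (h1 : L.pos v₁ < L.pos sv) (h2 : L.pos sv < L.pos tv) (h3 : L.pos tv < L.pos v₂)
    (hq : s(v₁, v₂) ∈ L.Q) :
    ∃ j : Fin 7,
      (L.pos (GcV.x i j) < L.pos v₁ ∨ L.pos v₂ < L.pos (GcV.x i j)) ∧
      ((s(sv, GcV.x i j) ∈ L.S ∧ s(tv, GcV.x i j) ∈ L.Q) ∨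
        (s(sv, GcV.x i j) ∈ L.Q ∧ s(tv, GcV.x i j) ∈ L.S)) := by

  by_contra hcon
  push_neg at hcon
  -- Basic facts
  have hxne : ∀ j : Fin 7, sv ≠ GcV.x i j ∧ tv ≠ GcV.x i j := by
    intro j
    rcases hst with ⟨hs, ht⟩ | ⟨hs, ht⟩ <;> subst hs <;> subst ht <;>
      exact ⟨fun h => GcV.noConfusion h, fun h => GcV.noConfusion h⟩
  have hE : ∀ j : Fin 7, s(sv, GcV.x i j) ∈ L.S ∪ L.Q ∧ s(tv, GcV.x i j) ∈ L.S ∪ L.Q := by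
    intro j
    rw [L.union_eq]
    rcases hst with ⟨hs, ht⟩ | ⟨hs, ht⟩ <;> subst hs <;> subst ht <;>
      exact ⟨⟨i, Or.inr <| Or.inr <| Or.inr <| Or.inr <| Or.inr ⟨j, by simp⟩⟩,
             ⟨i, Or.inr <| Or.inr <| Or.inr <| Or.inr <| Or.inr ⟨j, by simp⟩⟩⟩
  -- Category membership
  have key : ∀ j : Fin 7, ∃ k : Fin 6,
      (k = 0 ∧ GcV.x i j = v₁) ∨
      (k = 1 ∧ GcV.x i j = v₂) ∨
      (k = 2 ∧ L.pos sv < L.pos (GcV.x i j) ∧ L.pos (GcV.x i j) < L.pos tv ∧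
        s(sv, GcV.x i j) ∈ L.S ∧ s(tv, GcV.x i j) ∈ L.S) ∨
      (k = 3 ∧ (L.pos (GcV.x i j) < L.pos sv ∨ L.pos tv < L.pos (GcV.x i j)) ∧
        s(sv, GcV.x i j) ∈ L.S ∧ s(tv, GcV.x i j) ∈ L.S) ∨
      (k = 4 ∧ L.pos (GcV.x i j) < L.pos v₁ ∧
        s(sv, GcV.x i j) ∈ L.Q ∧ s(tv, GcV.x i j) ∈ L.Q) ∨
      (k = 5 ∧ L.pos v₂ < L.pos (GcV.x i j) ∧
        s(sv, GcV.x i j) ∈ L.Q ∧ s(tv, GcV.x i j) ∈ L.Q) := by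
    intro j
    obtain ⟨hes, het⟩ := hE j
    obtain ⟨hsx, htx⟩ := hxne j
    have hsx' : L.pos sv ≠ L.pos (GcV.x i j) := fun h => hsx (L.inj h)
    have htx' : L.pos tv ≠ L.pos (GcV.x i j) := fun h => htx (L.inj h)
    rcases lt_trichotomy (L.pos (GcV.x i j)) (L.pos v₁) with hL | hL | hL
    · -- strictly left of v₁
      have hout := hcon j (Or.inl hL)
      rcases hes with hesS | hesQ
      · rcases het with hetS | hetQ
        · exact ⟨3, Or.inr <| Or.inr <| Or.inr <| Or.inl
            ⟨rfl, Or.inl (hL.trans h1), hesS, hetS⟩⟩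
        · exact absurd hetQ (hout.1 hesS)
      · rcases het with hetS | hetQ
        · exact absurd hetS (hout.2 hesQ)
        · exact ⟨4, Or.inr <| Or.inr <| Or.inr <| Or.inr <| Or.inl ⟨rfl, hL, hesQ, hetQ⟩⟩
    · exact ⟨0, Or.inl ⟨rfl, L.inj hL⟩⟩
    · rcases lt_trichotomy (L.pos (GcV.x i j)) (L.pos v₂) with hR | hR | hR
      · -- strictly inside (v₁, v₂): both edges must be stack edges
        have hesS : s(sv, GcV.x i j) ∈ L.S := by
          rcases hes with h | h
          · exact h
          · exfalso
            rcases lt_or_gt_of_ne hsx' with hlt | hgt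
            · exact L.noNest h1 hlt hR hq h
            · exact L.noNest hL hgt (h2.trans h3) hq (L.swapQ h)
        have hetS : s(tv, GcV.x i j) ∈ L.S := by
          rcases het with h | h
          · exact h
          · exfalso
            rcases lt_or_gt_of_ne htx' with hlt | hgt
            · exact L.noNest (h1.trans h2) hlt hR hq h
            · exact L.noNest hL hgt h3 hq (L.swapQ h)
        rcases lt_or_gt_of_ne hsx' with hs1 | hs1
        · rcases lt_or_gt_of_ne htx' with ht1 | ht1
          · exact ⟨3, Or.inr <| Or.inr <| Or.inr <| Or.inl ⟨rfl, Or.inr ht1, hesS, hetS⟩⟩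
          · exact ⟨2, Or.inr <| Or.inr <| Or.inl ⟨rfl, hs1, ht1, hesS, hetS⟩⟩
        · exact ⟨3, Or.inr <| Or.inr <| Or.inr <| Or.inl ⟨rfl, Or.inl hs1, hesS, hetS⟩⟩
      · exact ⟨1, Or.inr <| Or.inl ⟨rfl, L.inj hR⟩⟩
      · -- strictly right of v₂
        have hout := hcon j (Or.inr hR)
        rcases hes with hesS | hesQ
        · rcases het with hetS | hetQ
          · exact ⟨3, Or.inr <| Or.inr <| Or.inr <| Or.inl
              ⟨rfl, Or.inr (h3.trans hR), hesS, hetS⟩⟩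
          · exact absurd hetQ (hout.1 hesS)
        · rcases het with hetS | hetQ
          · exact absurd hetS (hout.2 hesQ)
          · exact ⟨5, Or.inr <| Or.inr <| Or.inr <| Or.inr <| Or.inr ⟨rfl, hR, hesQ, hetQ⟩⟩
  -- Per-category conflict lemmas
  have cat2conf : ∀ j j' : Fin 7, L.pos (GcV.x i j) < L.pos (GcV.x i j') →
      (L.pos sv < L.pos (GcV.x i j) ∧ L.pos (GcV.x i j) < L.pos tv ∧
        s(sv, GcV.x i j) ∈ L.S ∧ s(tv, GcV.x i j) ∈ L.S) →
      (L.pos sv < L.pos (GcV.x i j') ∧ L.pos (GcV.x i j') < L.pos tv ∧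
        s(sv, GcV.x i j') ∈ L.S ∧ s(tv, GcV.x i j') ∈ L.S) → False := by
    intro j j' hlt h h'
    exact L.noCross h.1 hlt h'.2.1 h'.2.2.1 (L.swapS h.2.2.2)
  have cat3conf : ∀ j j' : Fin 7, L.pos (GcV.x i j) < L.pos (GcV.x i j') →
      ((L.pos (GcV.x i j) < L.pos sv ∨ L.pos tv < L.pos (GcV.x i j)) ∧
        s(sv, GcV.x i j) ∈ L.S ∧ s(tv, GcV.x i j) ∈ L.S) →
      ((L.pos (GcV.x i j') < L.pos sv ∨ L.pos tv < L.pos (GcV.x i j')) ∧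
        s(sv, GcV.x i j') ∈ L.S ∧ s(tv, GcV.x i j') ∈ L.S) → False := by
    intro j j' hlt h h'
    rcases h.1 with hlo | hhi
    · rcases h'.1 with hlo' | hhi'
      · exact L.noCross hlt hlo' h2 (L.swapS h.2.1) (L.swapS h'.2.2)
      · exact L.noCross hlo h2 hhi' (L.swapS h.2.2) h'.2.1
    · rcases h'.1 with hlo' | hhi'
      · exact absurd (hlt.trans (hlo'.trans h2)) (by exact fun hc => absurd hhi (by omega))
      · exact L.noCross h2 hhi hlt h.2.1 h'.2.2
  have cat4conf : ∀ j j' : Fin 7, L.pos (GcV.x i j) < L.pos (GcV.x i j') →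
      (L.pos (GcV.x i j) < L.pos v₁ ∧ s(sv, GcV.x i j) ∈ L.Q ∧ s(tv, GcV.x i j) ∈ L.Q) →
      (L.pos (GcV.x i j') < L.pos v₁ ∧ s(sv, GcV.x i j') ∈ L.Q ∧ s(tv, GcV.x i j') ∈ L.Q) →
      False := by
    intro j j' hlt h h'
    exact L.noNest hlt (h'.1.trans h1) h2 (L.swapQ h.2.2) (L.swapQ h'.2.1)
  have cat5conf : ∀ j j' : Fin 7, L.pos (GcV.x i j) < L.pos (GcV.x i j') →
      (L.pos v₂ < L.pos (GcV.x i j) ∧ s(sv, GcV.x i j) ∈ L.Q ∧ s(tv, GcV.x i j) ∈ L.Q) →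
      (L.pos v₂ < L.pos (GcV.x i j') ∧ s(sv, GcV.x i j') ∈ L.Q ∧ s(tv, GcV.x i j') ∈ L.Q) →
      False := by
    intro j j' hlt h h'
    exact L.noNest h2 (h3.trans h.1) hlt h'.2.1 h.2.2
  choose f hf using key
  have finj : Function.Injective f := by
    intro j j' heq
    by_contra hjj
    have hxx : GcV.x i j ≠ GcV.x i j' := by
      intro h
      exact hjj (by injection h)
    have hpp : L.pos (GcV.x i j) ≠ L.pos (GcV.x i j') := fun h => hxx (L.inj h)
    rcases hf j with ⟨hk, hc⟩ | ⟨hk, hc⟩ | ⟨hk, hc⟩ | ⟨hk, hc⟩ | ⟨hk, hc⟩ | ⟨hk, hc⟩ <;>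
      rcases hf j' with ⟨hk', hc'⟩ | ⟨hk', hc'⟩ | ⟨hk', hc'⟩ | ⟨hk', hc'⟩ | ⟨hk', hc'⟩ |
        ⟨hk', hc'⟩ <;>
      rw [hk, hk'] at heq <;>
      first
        | exact absurd heq (by decide)
        | exact hxx (hc.trans hc'.symm)
        | (rcases lt_or_gt_of_ne hpp with ho | ho
           · exact cat2conf j j' ho hc hc'
           · exact cat2conf j' j ho hc' hc)
        | (rcases lt_or_gt_of_ne hpp with ho | ho
           · exact cat3conf j j' ho hc hc'
           · exact cat3conf j' j ho hc' hc)
        | (rcases lt_or_gt_of_ne hpp with ho | ho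
           · exact cat4conf j j' ho hc hc'
           · exact cat4conf j' j ho hc' hc)
        | (rcases lt_or_gt_of_ne hpp with ho | ho
           · exact cat5conf j j' ho hc hc'
           · exact cat5conf j' j ho hc' hc)
  have := Fintype.card_le_of_injective f finj
  simp at this
end

section
/- No mixed 1-stack 1-queue layout of G_c contains vertices v_1 < u_1 < s < t < u_2 < v_2 such that s, t is a twin pair, the edge (v_1, v_2) belongs to the queue Q, and the edge (u_1, u_2) belongs to the stack S. -/
/-- No mixed layout of `G_c` contains `v₁ < u₁ < s < t < u₂ < v₂`
for a twin pair `s, t` with `(v₁, v₂)` a queue edge and `(u₁, u₂)` a stack edge. -/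
theorem Gc_lemma_RB (L : GcMixedLayout) (i : Fin 19) (sv tv v₁ u₁ u₂ v₂ : GcV)
    (hst : (sv = GcV.s i ∧ tv = GcV.t i) ∨ (sv = GcV.t i ∧ tv = GcV.s i))
    (h1 : L.pos v₁ < L.pos u₁) (h2 : L.pos u₁ < L.pos sv)
    (h3 : L.pos sv < L.pos tv) (h4 : L.pos tv < L.pos u₂)
    (h5 : L.pos u₂ < L.pos v₂)
    (hq : s(v₁, v₂) ∈ L.Q) (hs : s(u₁, u₂) ∈ L.S) :
    False := by
  -- edge memberships for connector edges
  have hedge : ∀ j : Fin 7, s(sv, GcV.x i j) ∈ GcEdges ∧ s(tv, GcV.x i j) ∈ GcEdges := by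
    intro j
    rcases hst with ⟨ha, hb⟩ | ⟨ha, hb⟩ <;> subst ha <;> subst hb
    · exact ⟨⟨i, Or.inr (Or.inr (Or.inr (Or.inr (Or.inr ⟨j, Or.inl rfl⟩))))⟩,
             ⟨i, Or.inr (Or.inr (Or.inr (Or.inr (Or.inr ⟨j, Or.inr rfl⟩))))⟩⟩
    · exact ⟨⟨i, Or.inr (Or.inr (Or.inr (Or.inr (Or.inr ⟨j, Or.inr rfl⟩))))⟩,
             ⟨i, Or.inr (Or.inr (Or.inr (Or.inr (Or.inr ⟨j, Or.inl rfl⟩))))⟩⟩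
  have hnes : ∀ j : Fin 7, L.pos (GcV.x i j) ≠ L.pos sv := by
    intro j h
    have := L.inj h
    rcases hst with ⟨ha, _⟩ | ⟨ha, _⟩ <;> subst ha <;> exact GcV.noConfusion this
  have hnet : ∀ j : Fin 7, L.pos (GcV.x i j) ≠ L.pos tv := by
    intro j h
    have := L.inj h
    rcases hst with ⟨_, hb⟩ | ⟨_, hb⟩ <;> subst hb <;> exact GcV.noConfusion this
  have mem' : ∀ e ∈ GcEdges, e ∈ L.S ∨ e ∈ L.Q := by
    intro e he
    rw [← L.union_eq] at he
    exact he
  -- an edge strictly inside (v₁, v₂) must be in the stack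
  have forceS : ∀ a b : GcV, s(a, b) ∈ GcEdges → L.pos v₁ < L.pos a →
      L.pos a < L.pos b → L.pos b < L.pos v₂ → s(a, b) ∈ L.S := by
    intro a b he ha hab hb
    rcases mem' _ he with h | h
    · exact h
    · exact absurd ⟨v₁, a, b, v₂, rfl, rfl, ha, hab, hb⟩ (L.queue _ hq _ h)
  -- an edge crossing (u₁, u₂) (left form) must be in the queue
  have forceQ1 : ∀ a b : GcV, s(a, b) ∈ GcEdges → L.pos a < L.pos u₁ →
      L.pos u₁ < L.pos b → L.pos b < L.pos u₂ → s(a, b) ∈ L.Q := by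
    intro a b he ha hb hc
    rcases mem' _ he with h | h
    · exact absurd ⟨a, u₁, b, u₂, rfl, rfl, ha, hb, hc⟩ (L.stack _ h _ hs)
    · exact h
  -- an edge crossing (u₁, u₂) (right form) must be in the queue
  have forceQ2 : ∀ a b : GcV, s(a, b) ∈ GcEdges → L.pos u₁ < L.pos a →
      L.pos a < L.pos u₂ → L.pos u₂ < L.pos b → s(a, b) ∈ L.Q := by
    intro a b he ha hb hc
    rcases mem' _ he with h | h
    · exact absurd ⟨u₁, a, u₂, b, rfl, rfl, ha, hb, hc⟩ (L.stack _ hs _ h)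
    · exact h
  set P := L.pos with hP
  -- region classification of the connectors
  let f : Fin 7 → Fin 5 := fun j =>
    if P (GcV.x i j) < P u₁ then 0
    else if P (GcV.x i j) < P sv then 1
    else if P (GcV.x i j) < P tv then 2
    else if P (GcV.x i j) ≤ P u₂ then 3
    else 4
  -- two connectors in the same region, with smaller position first, give a contradiction
  have key : ∀ j k : Fin 7, f j = f k → P (GcV.x i j) < P (GcV.x i k) → False := by
    intro j k hfeq hlt
    simp only [f] at hfeq
    split_ifs at hfeq with hj1 hk1 hk2 hk3 hk4 hj2 hk1 hk2 hk3 hk4 hj3 hk1 hk2 hk3 hk4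
      hj4 hk1 hk2 hk3 hk4 hk1 hk2 hk3 hk4 <;>
      first
      | exact absurd hfeq (by decide)
      | skip
    -- Region 0: both left of u₁
    · have qjt : s(GcV.x i j, tv) ∈ L.Q := by
        refine forceQ1 _ _ ?_ hj1 (h2.trans h3) h4
        rw [Sym2.eq_swap]; exact (hedge j).2
      have qks : s(GcV.x i k, sv) ∈ L.Q := by
        refine forceQ1 _ _ ?_ hk1 h2 (h3.trans h4)
        rw [Sym2.eq_swap]; exact (hedge k).1
      exact L.queue _ qjt _ qks ⟨_, _, _, _, rfl, rfl, hlt, hk1.trans h2, h3⟩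
    -- Region 1: both in [u₁, s)
    · have sjs : s(GcV.x i j, sv) ∈ L.S := by
        refine forceS _ _ ?_ (h1.trans_le (not_lt.mp hj1)) hj2 (h3.trans (h4.trans h5))
        rw [Sym2.eq_swap]; exact (hedge j).1
      have skt : s(GcV.x i k, tv) ∈ L.S := by
        refine forceS _ _ ?_ (h1.trans_le (not_lt.mp hk1)) (hk2.trans h3) (h4.trans h5)
        rw [Sym2.eq_swap]; exact (hedge k).2
      exact L.stack _ sjs _ skt ⟨_, _, _, _, rfl, rfl, hlt, hk2, h3⟩
    -- Region 2: both in (s, t)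
    · have hsvj : P sv < P (GcV.x i j) :=
        lt_of_le_of_ne (not_lt.mp hj2) (Ne.symm (hnes j))
      have ssk : s(sv, GcV.x i k) ∈ L.S :=
        forceS _ _ (hedge k).1 (h1.trans h2) (hsvj.trans hlt)
          (hk3.trans (h4.trans h5))
      have sjt : s(GcV.x i j, tv) ∈ L.S := by
        refine forceS _ _ ?_ ((h1.trans h2).trans hsvj) hj3 (h4.trans h5)
        rw [Sym2.eq_swap]; exact (hedge j).2
      exact L.stack _ ssk _ sjt ⟨_, _, _, _, rfl, rfl, hsvj, hlt, hk3⟩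
    -- Region 3: both in (t, u₂]
    · have htvj : P tv < P (GcV.x i j) :=
        lt_of_le_of_ne (not_lt.mp hj3) (Ne.symm (hnet j))
      have htvk : P tv < P (GcV.x i k) := htvj.trans hlt
      have ssj : s(sv, GcV.x i j) ∈ L.S :=
        forceS _ _ (hedge j).1 (h1.trans h2) (h3.trans htvj) (hj4.trans_lt h5)
      have stk : s(tv, GcV.x i k) ∈ L.S :=
        forceS _ _ (hedge k).2 ((h1.trans h2).trans h3) htvk (hk4.trans_lt h5)
      exact L.stack _ ssj _ stk ⟨_, _, _, _, rfl, rfl, h3, htvj, hlt⟩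
    -- Region 4: both right of u₂
    · have hj : P u₂ < P (GcV.x i j) := not_le.mp hj4
      have hk : P u₂ < P (GcV.x i k) := not_le.mp hk4
      have qtj : s(tv, GcV.x i j) ∈ L.Q :=
        forceQ2 _ _ (hedge j).2 (h2.trans h3) h4 hj
      have qsk : s(sv, GcV.x i k) ∈ L.Q :=
        forceQ2 _ _ (hedge k).1 h2 (h3.trans h4) hk
      exact L.queue _ qsk _ qtj ⟨_, _, _, _, rfl, rfl, h3, h4.trans hj, hlt⟩
  -- pigeonhole: 7 connectors, 5 regions
  obtain ⟨j, k, hjk, hfeq⟩ := Fintype.exists_ne_map_eq_of_card_lt f (by decide)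
  have hne : P (GcV.x i j) ≠ P (GcV.x i k) := by
    intro h
    have := L.inj h
    simp only [GcV.x.injEq] at this
    exact hjk (Fin.ext (congrArg Fin.val (this.2)))
  rcases lt_or_gt_of_ne hne with hlt | hgt
  · exact key j k hfeq hlt
  · exact key k j hfeq.symm hgt
end

section
/- No mixed 1-stack 1-queue layout of G_c contains four distinct twin pairs s_{i_m}, t_{i_m} (m = 1, 2, 3, 4, with s_{i_m} < t_{i_m} after possibly exchanging names within each pair) satisfying the vertex ordering pattern s_{i_m} < A < B < t_{i_m} for all m. -/
section Aux

open GcV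

private lemma gc_st_ne {i j : Fin 19} (hij : i ≠ j) {a b : GcV}
    (ha : a = GcV.s i ∨ a = GcV.t i) (hb : b = GcV.s j ∨ b = GcV.t j) : a ≠ b := by
  rcases ha with rfl | rfl <;> rcases hb with rfl | rfl <;> intro h <;>
    first
      | exact hij (GcV.s.inj h)
      | exact hij (GcV.t.inj h)
      | exact GcV.noConfusion h

/-- Extract, for a twin pair realizing the pattern, the small vertex `u` and
the large vertex `v` together with all edge memberships we need. -/
private lemma gc_extract (L : GcMixedLayout) (i : Fin 19)
    (h : min (L.pos (GcV.s i)) (L.pos (GcV.t i)) < L.pos GcV.A ∧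
      L.pos GcV.A < L.pos GcV.B ∧
      L.pos GcV.B < max (L.pos (GcV.s i)) (L.pos (GcV.t i))) :
    ∃ u v : GcV, (u = GcV.s i ∨ u = GcV.t i) ∧ (v = GcV.s i ∨ v = GcV.t i) ∧
      L.pos u < L.pos GcV.A ∧ L.pos GcV.B < L.pos v ∧
      s(u, v) ∈ GcEdges ∧ s(u, GcV.B) ∈ GcEdges ∧ s(GcV.A, v) ∈ GcEdges ∧
      s(GcV.B, v) ∈ GcEdges ∧ s(GcV.A, u) ∈ GcEdges := by
  obtain ⟨h1, h2, h3⟩ := h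
  rcases le_total (L.pos (GcV.s i)) (L.pos (GcV.t i)) with hle | hle
  · refine ⟨GcV.s i, GcV.t i, Or.inl rfl, Or.inr rfl, ?_, ?_, ?_, ?_, ?_, ?_, ?_⟩
    · simpa [min_eq_left hle] using h1
    · simpa [max_eq_right hle] using h3
    · exact ⟨i, Or.inl rfl⟩
    · exact ⟨i, Or.inr (Or.inr (Or.inr (Or.inl Sym2.eq_swap)))⟩
    · exact ⟨i, Or.inr (Or.inr (Or.inl rfl))⟩
    · exact ⟨i, Or.inr (Or.inr (Or.inr (Or.inr (Or.inl rfl))))⟩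
    · exact ⟨i, Or.inr (Or.inl rfl)⟩
  · refine ⟨GcV.t i, GcV.s i, Or.inr rfl, Or.inl rfl, ?_, ?_, ?_, ?_, ?_, ?_, ?_⟩
    · simpa [min_eq_right hle] using h1
    · simpa [max_eq_left hle] using h3
    · exact ⟨i, Or.inl Sym2.eq_swap⟩
    · exact ⟨i, Or.inr (Or.inr (Or.inr (Or.inr (Or.inl Sym2.eq_swap))))⟩
    · exact ⟨i, Or.inr (Or.inl rfl)⟩
    · exact ⟨i, Or.inr (Or.inr (Or.inr (Or.inl rfl)))⟩
    · exact ⟨i, Or.inr (Or.inr (Or.inl rfl))⟩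

/-- Case where all the edges `(A, vⱼ)` are in the queue; the `v`'s are sorted. -/
private lemma gc_caseG (L : GcMixedLayout) (ub va vb vc vd : GcV)
    (hga : s(GcV.A, va) ∈ L.Q) (hgd : s(GcV.A, vd) ∈ L.Q)
    (heb : s(ub, vb) ∈ GcEdges) (hhc : s(GcV.B, vc) ∈ GcEdges)
    (h1 : L.pos ub < L.pos GcV.A) (h2 : L.pos GcV.A < L.pos GcV.B)
    (h3 : L.pos GcV.B < L.pos va) (h4 : L.pos va < L.pos vb)
    (h5 : L.pos vb < L.pos vc) (h6 : L.pos vc < L.pos vd) : False := by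
  have hebU : s(ub, vb) ∈ L.S ∪ L.Q := by rw [L.union_eq]; exact heb
  have hhcU : s(GcV.B, vc) ∈ L.S ∪ L.Q := by rw [L.union_eq]; exact hhc
  have hebS : s(ub, vb) ∈ L.S := by
    rcases hebU with hS | hQ
    · exact hS
    · exact absurd ⟨ub, GcV.A, va, vb, rfl, rfl, h1, h2.trans h3, h4⟩
        (L.queue _ hQ _ hga)
  have hhcS : s(GcV.B, vc) ∈ L.S := by
    rcases hhcU with hS | hQ
    · exact hS
    · exact absurd ⟨GcV.A, GcV.B, vc, vd, rfl, rfl, h2, h3.trans (h4.trans h5), h6⟩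
        (L.queue _ hgd _ hQ)
  exact L.stack _ hebS _ hhcS
    ⟨ub, GcV.B, vb, vc, rfl, rfl, h1.trans h2, h3.trans h4, h5⟩

/-- Case where all the edges `(uⱼ, B)` are in the queue; the `u`'s are sorted. -/
private lemma gc_caseF (L : GcMixedLayout) (ua ub uc ud vc : GcV)
    (hfa : s(ua, GcV.B) ∈ L.Q) (hfd : s(ud, GcV.B) ∈ L.Q)
    (hmb : s(GcV.A, ub) ∈ GcEdges) (hec : s(uc, vc) ∈ GcEdges)
    (h1 : L.pos ua < L.pos ub) (h2 : L.pos ub < L.pos uc)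
    (h3 : L.pos uc < L.pos ud) (h4 : L.pos ud < L.pos GcV.A)
    (h5 : L.pos GcV.A < L.pos GcV.B) (h6 : L.pos GcV.B < L.pos vc) : False := by
  have hmbU : s(GcV.A, ub) ∈ L.S ∪ L.Q := by rw [L.union_eq]; exact hmb
  have hecU : s(uc, vc) ∈ L.S ∪ L.Q := by rw [L.union_eq]; exact hec
  have hmbS : s(GcV.A, ub) ∈ L.S := by
    rcases hmbU with hS | hQ
    · exact hS
    · exact absurd ⟨ua, ub, GcV.A, GcV.B, rfl, Sym2.eq_swap, h1, h2.trans (h3.trans h4), h5⟩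
        (L.queue _ hfa _ hQ)
  have hecS : s(uc, vc) ∈ L.S := by
    rcases hecU with hS | hQ
    · exact hS
    · exact absurd ⟨uc, ud, GcV.B, vc, rfl, rfl, h3, h4.trans h5, h6⟩
        (L.queue _ hQ _ hfd)
  exact L.stack _ hmbS _ hecS
    ⟨ub, uc, GcV.A, vc, Sym2.eq_swap, rfl, h2, h3.trans h4, h5.trans h6⟩

private lemma gc_sorted4 (y : Fin 4 → ℕ) (hy : Function.Injective y) :
    ∃ σ : Equiv.Perm (Fin 4),
      y (σ 0) < y (σ 1) ∧ y (σ 1) < y (σ 2) ∧ y (σ 2) < y (σ 3) := by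
  have hm : StrictMono (y ∘ Tuple.sort y) :=
    (Tuple.monotone_sort y).strictMono_of_injective
      (hy.comp (Tuple.sort y).injective)
  exact ⟨Tuple.sort y, hm (by decide), hm (by decide), hm (by decide)⟩

end Aux

/-- No mixed layout of `G_c` contains four distinct twin pairs
(with names within each pair exchanged so the smaller twin comes first) all
realizing the ordering pattern `s < A < B < t`. -/
theorem Gc_case_sABt (L : GcMixedLayout) (i₁ i₂ i₃ i₄ : Fin 19)
    (hne : i₁ ≠ i₂ ∧ i₁ ≠ i₃ ∧ i₁ ≠ i₄ ∧ i₂ ≠ i₃ ∧ i₂ ≠ i₄ ∧ i₃ ≠ i₄)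
    (hpat : ∀ i ∈ ({i₁, i₂, i₃, i₄} : Set (Fin 19)),
      min (L.pos (GcV.s i)) (L.pos (GcV.t i)) < L.pos GcV.A ∧ L.pos GcV.A < L.pos GcV.B ∧ L.pos GcV.B < max (L.pos (GcV.s i)) (L.pos (GcV.t i))) :
    False := by
  obtain ⟨h12, h13, h14, h23, h24, h34⟩ := hne
  obtain ⟨u1, v1, hu1m, hv1m, hu1, hv1, he1, hf1, hg1, hh1, hm1⟩ :=
    gc_extract L i₁ (hpat i₁ (by simp))
  obtain ⟨u2, v2, hu2m, hv2m, hu2, hv2, he2, hf2, hg2, hh2, hm2⟩ :=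
    gc_extract L i₂ (hpat i₂ (by simp))
  obtain ⟨u3, v3, hu3m, hv3m, hu3, hv3, he3, hf3, hg3, hh3, hm3⟩ :=
    gc_extract L i₃ (hpat i₃ (by simp))
  obtain ⟨u4, v4, hu4m, hv4m, hu4, hv4, he4, hf4, hg4, hh4, hm4⟩ :=
    gc_extract L i₄ (hpat i₄ (by simp))
  have hAB : L.pos GcV.A < L.pos GcV.B := (hpat i₁ (by simp)).2.1
  set uu : Fin 4 → GcV := ![u1, u2, u3, u4] with huu
  set vv : Fin 4 → GcV := ![v1, v2, v3, v4] with hvv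
  set ii : Fin 4 → Fin 19 := ![i₁, i₂, i₃, i₄] with hii
  have hum : ∀ k, uu k = GcV.s (ii k) ∨ uu k = GcV.t (ii k) := by
    intro k; fin_cases k <;> assumption
  have hvm : ∀ k, vv k = GcV.s (ii k) ∨ vv k = GcV.t (ii k) := by
    intro k; fin_cases k <;> assumption
  have hiine : ∀ k k' : Fin 4, k ≠ k' → ii k ≠ ii k' := by
    intro k k' hkk
    fin_cases k <;> fin_cases k' <;>
      first
        | exact absurd rfl hkk
        | assumption
        | · intro h; first
              | exact h12 h.symm | exact h13 h.symm | exact h14 h.symm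
              | exact h23 h.symm | exact h24 h.symm | exact h34 h.symm
  have hu : ∀ k, L.pos (uu k) < L.pos GcV.A := by intro k; fin_cases k <;> assumption
  have hv : ∀ k, L.pos GcV.B < L.pos (vv k) := by intro k; fin_cases k <;> assumption
  have heE : ∀ k, s(uu k, vv k) ∈ GcEdges := by intro k; fin_cases k <;> assumption
  have hfE : ∀ k, s(uu k, GcV.B) ∈ GcEdges := by intro k; fin_cases k <;> assumption
  have hgE : ∀ k, s(GcV.A, vv k) ∈ GcEdges := by intro k; fin_cases k <;> assumption
  have hhE : ∀ k, s(GcV.B, vv k) ∈ GcEdges := by intro k; fin_cases k <;> assumption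
  have hmE : ∀ k, s(GcV.A, uu k) ∈ GcEdges := by intro k; fin_cases k <;> assumption
  have huinj : Function.Injective (fun k => L.pos (uu k)) := by
    intro k k' h
    by_contra hkk
    exact gc_st_ne (hiine k k' hkk) (hum k) (hum k') (L.inj h)
  have hvinj : Function.Injective (fun k => L.pos (vv k)) := by
    intro k k' h
    by_contra hkk
    exact gc_st_ne (hiine k k' hkk) (hvm k) (hvm k') (L.inj h)
  by_cases hQ : ∀ k, s(uu k, GcV.B) ∈ L.Q
  · -- all edges (u_k, B) are in the queue
    obtain ⟨σ, s01, s12, s23⟩ := gc_sorted4 (fun k => L.pos (uu k)) huinj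
    exact gc_caseF L (uu (σ 0)) (uu (σ 1)) (uu (σ 2)) (uu (σ 3)) (vv (σ 2))
      (hQ (σ 0)) (hQ (σ 3)) (hmE (σ 1)) (heE (σ 2))
      s01 s12 s23 (hu (σ 3)) hAB (hv (σ 2))
  · -- some edge (u_k, B) is in the stack, so all edges (A, v_j) are in the queue
    push_neg at hQ
    obtain ⟨k, hk⟩ := hQ
    have hkS : s(uu k, GcV.B) ∈ L.S := by
      have : s(uu k, GcV.B) ∈ L.S ∪ L.Q := by rw [L.union_eq]; exact hfE k
      rcases this with hS | hQ'
      · exact hS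
      · exact absurd hQ' hk
    have hGQ : ∀ j, s(GcV.A, vv j) ∈ L.Q := by
      intro j
      have : s(GcV.A, vv j) ∈ L.S ∪ L.Q := by rw [L.union_eq]; exact hgE j
      rcases this with hS | hQ'
      · exact absurd ⟨uu k, GcV.A, GcV.B, vv j, rfl, rfl, hu k, hAB, hv j⟩
          (L.stack _ hkS _ hS)
      · exact hQ'
    obtain ⟨σ, s01, s12, s23⟩ := gc_sorted4 (fun k => L.pos (vv k)) hvinj
    exact gc_caseG L (uu (σ 1)) (vv (σ 0)) (vv (σ 1)) (vv (σ 2)) (vv (σ 3))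
      (hGQ (σ 0)) (hGQ (σ 3)) (heE (σ 1)) (hhE (σ 2))
      (hu (σ 1)) hAB (hv (σ 0)) s01 s12 s23
end

section
/- No mixed 1-stack 1-queue layout of G_c contains four distinct twin pairs s_{i_m}, t_{i_m} (m = 1, 2, 3, 4, with s_{i_m} < t_{i_m} after possibly exchanging names within each pair) satisfying the vertex ordering pattern A < B < s_{i_m} < t_{i_m} for all m. -/
namespace GcAux

/-! ### Basic helpers -/

lemma posNe (L : GcMixedLayout) {a b : GcV} (h : a ≠ b) : L.pos a ≠ L.pos b :=
  fun hp => h (L.inj hp)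

lemma sw {S : Set (Sym2 GcV)} {a b : GcV} (h : s(a, b) ∈ S) : s(b, a) ∈ S := by
  rwa [Sym2.eq_swap]

lemma memSQ (L : GcMixedLayout) {e : Sym2 GcV} (h : e ∈ GcEdges) : e ∈ L.S ∨ e ∈ L.Q := by
  rw [← L.union_eq] at h; exact h

lemma inQ (L : GcMixedLayout) {e : Sym2 GcV} (h : e ∈ GcEdges) (hn : e ∈ L.S → False) :
    e ∈ L.Q := (memSQ L h).resolve_left hn

lemma inS (L : GcMixedLayout) {e : Sym2 GcV} (h : e ∈ GcEdges) (hn : e ∈ L.Q → False) :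
    e ∈ L.S := (memSQ L h).resolve_right hn

lemma cx (L : GcMixedLayout) {a b c d : GcV} (h1 : s(a, c) ∈ L.S) (h2 : s(b, d) ∈ L.S)
    (o1 : L.pos a < L.pos b) (o2 : L.pos b < L.pos c) (o3 : L.pos c < L.pos d) : False :=
  L.stack _ h1 _ h2 ⟨a, b, c, d, rfl, rfl, o1, o2, o3⟩

lemma nst (L : GcMixedLayout) {a b c d : GcV} (h1 : s(a, d) ∈ L.Q) (h2 : s(b, c) ∈ L.Q)
    (o1 : L.pos a < L.pos b) (o2 : L.pos b < L.pos c) (o3 : L.pos c < L.pos d) : False :=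
  L.queue _ h1 _ h2 ⟨a, b, c, d, rfl, rfl, o1, o2, o3⟩

lemma region6 {a b s t v w : ℕ} (h1 : a < b) (h2 : b < s) (h3 : s < t) (h4 : t < v)
    (n1 : w ≠ a) (n2 : w ≠ b) (n3 : w ≠ s) (n4 : w ≠ t) (n5 : w ≠ v) :
    w < a ∨ (a < w ∧ w < b) ∨ (b < w ∧ w < s) ∨ (s < w ∧ w < t) ∨ (t < w ∧ w < v) ∨ v < w := by
  omega

lemma pigeon3 {In Out : Fin 3 → Prop} (h : ∀ j, In j ∨ Out j)
    (kIn : ∀ j k : Fin 3, j ≠ k → In j → In k → False)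
    (kOut : ∀ j k : Fin 3, j ≠ k → Out j → Out k → False) : False := by
  rcases h 0 with h0 | h0 <;> rcases h 1 with h1 | h1 <;> rcases h 2 with h2 | h2
  · exact kIn 0 1 (by decide) h0 h1
  · exact kIn 0 1 (by decide) h0 h1
  · exact kIn 0 2 (by decide) h0 h2
  · exact kOut 1 2 (by decide) h1 h2
  · exact kIn 1 2 (by decide) h1 h2
  · exact kOut 0 2 (by decide) h0 h2
  · exact kOut 0 1 (by decide) h0 h1
  · exact kOut 0 1 (by decide) h0 h1

/-! ### A twin pair with three of its connectors -/

structure PairW (L : GcMixedLayout) (σ τ : GcV) (x : Fin 3 → GcV) : Prop where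
  eT  : s(σ, τ) ∈ GcEdges
  eAs : s(GcV.A, σ) ∈ GcEdges
  eAt : s(GcV.A, τ) ∈ GcEdges
  eBs : s(GcV.B, σ) ∈ GcEdges
  eBt : s(GcV.B, τ) ∈ GcEdges
  esx : ∀ j, s(σ, x j) ∈ GcEdges
  etx : ∀ j, s(τ, x j) ∈ GcEdges
  hAB : L.pos GcV.A < L.pos GcV.B
  hBs : L.pos GcV.B < L.pos σ
  hst : L.pos σ < L.pos τ
  xA : ∀ j, L.pos (x j) ≠ L.pos GcV.A
  xB : ∀ j, L.pos (x j) ≠ L.pos GcV.B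
  xS : ∀ j, L.pos (x j) ≠ L.pos σ
  xT : ∀ j, L.pos (x j) ≠ L.pos τ
  xx : ∀ j k : Fin 3, j ≠ k → L.pos (x j) ≠ L.pos (x k)

/-! ### Lemma L*: if `A < B < σ < τ < v` then not ((A,v) ∈ Q and (B,v) ∈ S) -/

lemma Lstar (L : GcMixedLayout) {σ τ v : GcV} {x : Fin 3 → GcV} (P : PairW L σ τ x)
    (hv : L.pos τ < L.pos v) (hxv : ∀ j, L.pos (x j) ≠ L.pos v)
    (hAv : s(GcV.A, v) ∈ L.Q) (hBv : s(GcV.B, v) ∈ L.S) : False := by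
  obtain ⟨eT, eAs, eAt, eBs, eBt, esx, etx, hAB, hBσ, hστ, xA, xB, xS, xT, xx⟩ := P
  have hAs : s(GcV.A, σ) ∈ L.Q := inQ L eAs fun h => cx L h hBv hAB hBσ (hστ.trans hv)
  have hAt : s(GcV.A, τ) ∈ L.Q := inQ L eAt fun h => cx L h hBv hAB (hBσ.trans hστ) hv
  have hBs : s(GcV.B, σ) ∈ L.S := inS L eBs fun h => nst L hAv h hAB hBσ (hστ.trans hv)
  have hBt : s(GcV.B, τ) ∈ L.S := inS L eBt fun h => nst L hAv h hAB (hBσ.trans hστ) hv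
  have hreg : ∀ j, (L.pos σ < L.pos (x j) ∧ L.pos (x j) < L.pos τ) ∨ L.pos v < L.pos (x j) := by
    intro j
    rcases region6 hAB hBσ hστ hv (xA j) (xB j) (xS j) (xT j) (hxv j) with h | h | h | h | h | h
    · exfalso
      have htx : s(x j, τ) ∈ L.Q := inQ L (sw (etx j)) fun hS =>
        cx L hS hBv (by omega) (by omega) (by omega)
      exact nst L htx hAs (by omega) (by omega) (by omega)
    · exfalso
      obtain ⟨h5, h6⟩ := h
      have hsx : s(x j, σ) ∈ L.Q := inQ L (sw (esx j)) fun hS =>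
        cx L hS hBv (by omega) (by omega) (by omega)
      exact nst L hAv hsx (by omega) (by omega) (by omega)
    · exfalso
      obtain ⟨h5, h6⟩ := h
      have htx : s(x j, τ) ∈ L.Q := inQ L (sw (etx j)) fun hS =>
        cx L hBs hS (by omega) (by omega) (by omega)
      exact nst L hAv htx (by omega) (by omega) (by omega)
    · exact Or.inl h
    · exfalso
      obtain ⟨h5, h6⟩ := h
      have hsx : s(σ, x j) ∈ L.Q := inQ L (esx j) fun hS =>
        cx L hBt hS (by omega) (by omega) (by omega)
      exact nst L hAv hsx (by omega) (by omega) (by omega)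
    · exact Or.inr h
  refine pigeon3 hreg ?_ ?_
  · intro j k hjk hj hk
    have key : ∀ j k : Fin 3, L.pos (x j) < L.pos (x k) →
        (L.pos σ < L.pos (x j) ∧ L.pos (x j) < L.pos τ) →
        (L.pos σ < L.pos (x k) ∧ L.pos (x k) < L.pos τ) → False := by
      intro j k hlt hj hk
      have h1 : s(σ, x k) ∈ L.S := inS L (esx k) fun hQ =>
        nst L hAt hQ (by omega) (by omega) (by omega)
      have h2 : s(x j, τ) ∈ L.S := inS L (sw (etx j)) fun hQ =>
        nst L hAv hQ (by omega) (by omega) (by omega)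
      exact cx L h1 h2 (by omega) (by omega) (by omega)
    rcases (xx j k hjk).lt_or_gt with h | h
    · exact key j k h hj hk
    · exact key k j h hk hj
  · intro j k hjk hj hk
    have key : ∀ j k : Fin 3, L.pos (x j) < L.pos (x k) →
        L.pos v < L.pos (x j) → L.pos v < L.pos (x k) → False := by
      intro j k hlt hj hk
      have h1 : s(τ, x j) ∈ L.Q := inQ L (etx j) fun hS =>
        cx L hBv hS (by omega) (by omega) (by omega)
      have h2 : s(σ, x k) ∈ L.Q := inQ L (esx k) fun hS =>
        cx L hBv hS (by omega) (by omega) (by omega)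
      exact nst L h2 h1 (by omega) (by omega) (by omega)
    rcases (xx j k hjk).lt_or_gt with h | h
    · exact key j k h hj hk
    · exact key k j h hk hj

/-! ### Lemma G1: covered pair with (A,v) ∈ S, (B,v) ∈ Q cannot have (A,σ) ∈ S and (B,σ) ∈ Q -/

lemma G1 (L : GcMixedLayout) {σ τ v : GcV} {x : Fin 3 → GcV} (P : PairW L σ τ x)
    (hv : L.pos τ < L.pos v) (hxv : ∀ j, L.pos (x j) ≠ L.pos v)
    (hAv : s(GcV.A, v) ∈ L.S) (hBv : s(GcV.B, v) ∈ L.Q)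
    (hAs : s(GcV.A, σ) ∈ L.S) (hBs : s(GcV.B, σ) ∈ L.Q) : False := by
  obtain ⟨eT, eAs, eAt, eBs, eBt, esx, etx, hAB, hBσ, hστ, xA, xB, xS, xT, xx⟩ := P
  have hAt : s(GcV.A, τ) ∈ L.S := inS L eAt fun hQ => nst L hQ hBs hAB hBσ hστ
  have hreg : ∀ j, (L.pos σ < L.pos (x j) ∧ L.pos (x j) < L.pos τ) ∨ L.pos v < L.pos (x j) := by
    intro j
    rcases region6 hAB hBσ hστ hv (xA j) (xB j) (xS j) (xT j) (hxv j) with h | h | h | h | h | h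
    · exfalso
      have htx : s(x j, τ) ∈ L.Q := inQ L (sw (etx j)) fun hS =>
        cx L hS hAv (by omega) (by omega) (by omega)
      exact nst L htx hBs (by omega) (by omega) (by omega)
    · exfalso
      obtain ⟨h5, h6⟩ := h
      have htx : s(x j, τ) ∈ L.S := inS L (sw (etx j)) fun hQ =>
        nst L hQ hBs (by omega) (by omega) (by omega)
      exact cx L hAs htx (by omega) (by omega) (by omega)
    · exfalso
      obtain ⟨h5, h6⟩ := h
      have htx : s(x j, τ) ∈ L.S := inS L (sw (etx j)) fun hQ =>
        nst L hBv hQ (by omega) (by omega) (by omega)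
      exact cx L hAs htx (by omega) (by omega) (by omega)
    · exact Or.inl h
    · exfalso
      obtain ⟨h5, h6⟩ := h
      have hsx : s(σ, x j) ∈ L.S := inS L (esx j) fun hQ =>
        nst L hBv hQ (by omega) (by omega) (by omega)
      exact cx L hAt hsx (by omega) (by omega) (by omega)
    · exact Or.inr h
  refine pigeon3 hreg ?_ ?_
  · intro j k hjk hj hk
    have key : ∀ j k : Fin 3, L.pos (x j) < L.pos (x k) →
        (L.pos σ < L.pos (x j) ∧ L.pos (x j) < L.pos τ) →
        (L.pos σ < L.pos (x k) ∧ L.pos (x k) < L.pos τ) → False := by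
      intro j k hlt hj hk
      have h1 : s(σ, x k) ∈ L.S := inS L (esx k) fun hQ =>
        nst L hBv hQ (by omega) (by omega) (by omega)
      have h2 : s(x j, τ) ∈ L.S := inS L (sw (etx j)) fun hQ =>
        nst L hBv hQ (by omega) (by omega) (by omega)
      exact cx L h1 h2 (by omega) (by omega) (by omega)
    rcases (xx j k hjk).lt_or_gt with h | h
    · exact key j k h hj hk
    · exact key k j h hk hj
  · intro j k hjk hj hk
    have key : ∀ j k : Fin 3, L.pos (x j) < L.pos (x k) →
        L.pos v < L.pos (x j) → L.pos v < L.pos (x k) → False := by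
      intro j k hlt hj hk
      have h1 : s(τ, x j) ∈ L.Q := inQ L (etx j) fun hS =>
        cx L hAv hS (by omega) (by omega) (by omega)
      have h2 : s(σ, x k) ∈ L.Q := inQ L (esx k) fun hS =>
        cx L hAv hS (by omega) (by omega) (by omega)
      exact nst L h2 h1 (by omega) (by omega) (by omega)
    rcases (xx j k hjk).lt_or_gt with h | h
    · exact key j k h hj hk
    · exact key k j h hk hj

/-! ### Lemma G3: covered pair with (A,v) ∈ S, (B,v) ∈ Q cannot have (A,τ) ∈ Q and (B,τ) ∈ S -/

lemma G3 (L : GcMixedLayout) {σ τ v : GcV} {x : Fin 3 → GcV} (P : PairW L σ τ x)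
    (hv : L.pos τ < L.pos v) (hxv : ∀ j, L.pos (x j) ≠ L.pos v)
    (hAv : s(GcV.A, v) ∈ L.S) (hBv : s(GcV.B, v) ∈ L.Q)
    (hAt : s(GcV.A, τ) ∈ L.Q) (hBt : s(GcV.B, τ) ∈ L.S) : False := by
  obtain ⟨eT, eAs, eAt', eBs, eBt, esx, etx, hAB, hBσ, hστ, xA, xB, xS, xT, xx⟩ := P
  have hAs : s(GcV.A, σ) ∈ L.Q := inQ L eAs fun hS => cx L hS hBt hAB hBσ hστ
  have hBs : s(GcV.B, σ) ∈ L.S := inS L eBs fun hQ => nst L hAt hQ hAB hBσ hστ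
  have hreg : ∀ j, (L.pos σ < L.pos (x j) ∧ L.pos (x j) < L.pos τ) ∨ L.pos v < L.pos (x j) := by
    intro j
    rcases region6 hAB hBσ hστ hv (xA j) (xB j) (xS j) (xT j) (hxv j) with h | h | h | h | h | h
    · exfalso
      have htx : s(x j, τ) ∈ L.Q := inQ L (sw (etx j)) fun hS =>
        cx L hS hAv (by omega) (by omega) (by omega)
      exact nst L htx hAs (by omega) (by omega) (by omega)
    · exfalso
      obtain ⟨h5, h6⟩ := h
      have hsx : s(x j, σ) ∈ L.Q := inQ L (sw (esx j)) fun hS =>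
        cx L hS hBt (by omega) (by omega) (by omega)
      exact nst L hAt hsx (by omega) (by omega) (by omega)
    · exfalso
      obtain ⟨h5, h6⟩ := h
      have htx : s(x j, τ) ∈ L.S := inS L (sw (etx j)) fun hQ =>
        nst L hBv hQ (by omega) (by omega) (by omega)
      exact cx L hBs htx (by omega) (by omega) (by omega)
    · exact Or.inl h
    · exfalso
      obtain ⟨h5, h6⟩ := h
      have hsx : s(σ, x j) ∈ L.S := inS L (esx j) fun hQ =>
        nst L hBv hQ (by omega) (by omega) (by omega)
      exact cx L hBt hsx (by omega) (by omega) (by omega)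
    · exact Or.inr h
  refine pigeon3 hreg ?_ ?_
  · intro j k hjk hj hk
    have key : ∀ j k : Fin 3, L.pos (x j) < L.pos (x k) →
        (L.pos σ < L.pos (x j) ∧ L.pos (x j) < L.pos τ) →
        (L.pos σ < L.pos (x k) ∧ L.pos (x k) < L.pos τ) → False := by
      intro j k hlt hj hk
      have h1 : s(σ, x k) ∈ L.S := inS L (esx k) fun hQ =>
        nst L hAt hQ (by omega) (by omega) (by omega)
      have h2 : s(x j, τ) ∈ L.S := inS L (sw (etx j)) fun hQ =>
        nst L hBv hQ (by omega) (by omega) (by omega)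
      exact cx L h1 h2 (by omega) (by omega) (by omega)
    rcases (xx j k hjk).lt_or_gt with h | h
    · exact key j k h hj hk
    · exact key k j h hk hj
  · intro j k hjk hj hk
    have key : ∀ j k : Fin 3, L.pos (x j) < L.pos (x k) →
        L.pos v < L.pos (x j) → L.pos v < L.pos (x k) → False := by
      intro j k hlt hj hk
      have h1 : s(τ, x j) ∈ L.Q := inQ L (etx j) fun hS =>
        cx L hAv hS (by omega) (by omega) (by omega)
      have h2 : s(σ, x k) ∈ L.Q := inQ L (esx k) fun hS =>
        cx L hAv hS (by omega) (by omega) (by omega)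
      exact nst L h2 h1 (by omega) (by omega) (by omega)
    rcases (xx j k hjk).lt_or_gt with h | h
    · exact key j k h hj hk
    · exact key k j h hk hj

/-! ### Type classification of a covered pair -/

lemma typeCl (L : GcMixedLayout) {σ τ v : GcV} {x : Fin 3 → GcV} (P : PairW L σ τ x)
    (hv : L.pos τ < L.pos v) (hxv : ∀ j, L.pos (x j) ≠ L.pos v)
    (hAv : s(GcV.A, v) ∈ L.S) (hBv : s(GcV.B, v) ∈ L.Q) :
    (s(GcV.A, σ) ∈ L.Q ∧ s(GcV.A, τ) ∈ L.S) ∨ (s(GcV.B, σ) ∈ L.S ∧ s(GcV.B, τ) ∈ L.Q) := by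
  rcases memSQ L P.eAs with hAs | hAs
  · right
    have hBs : s(GcV.B, σ) ∈ L.S := inS L P.eBs fun hQ => G1 L P hv hxv hAv hBv hAs hQ
    have hBt : s(GcV.B, τ) ∈ L.Q := inQ L P.eBt fun hS =>
      cx L hAs hS P.hAB P.hBs P.hst
    exact ⟨hBs, hBt⟩
  · rcases memSQ L P.eAt with hAt | hAt
    · exact Or.inl ⟨hAs, hAt⟩
    · right
      have hBs : s(GcV.B, σ) ∈ L.S := inS L P.eBs fun hQ =>
        nst L hAt hQ P.hAB P.hBs P.hst
      have hBt : s(GcV.B, τ) ∈ L.Q := inQ L P.eBt fun hS => G3 L P hv hxv hAv hBv hAt hS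
      exact ⟨hBs, hBt⟩

/-! ### Clash lemmas for two covered pairs -/

lemma clashAB (L : GcMixedLayout) {σ0 τ0 σ1 τ1 v : GcV} {x0 x1 : Fin 3 → GcV}
    (P0 : PairW L σ0 τ0 x0) (P1 : PairW L σ1 τ1 x1)
    (hv0 : L.pos τ0 < L.pos v) (hv1 : L.pos τ1 < L.pos v)
    (nσσ : L.pos σ0 ≠ L.pos σ1) (nστ : L.pos σ0 ≠ L.pos τ1)
    (nτσ : L.pos τ0 ≠ L.pos σ1) (nττ : L.pos τ0 ≠ L.pos τ1)
    (hBv : s(GcV.B, v) ∈ L.Q)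
    (h0 : s(GcV.A, σ0) ∈ L.Q ∧ s(GcV.A, τ0) ∈ L.S)
    (h1 : s(GcV.B, σ1) ∈ L.S ∧ s(GcV.B, τ1) ∈ L.Q) : False := by
  have hT0 : s(σ0, τ0) ∈ L.S := inS L P0.eT fun hQ => nst L hBv hQ P0.hBs P0.hst hv0
  have hT1 : s(σ1, τ1) ∈ L.S := inS L P1.eT fun hQ => nst L hBv hQ P1.hBs P1.hst hv1
  have s1 : L.pos σ0 < L.pos τ1 := by
    rcases nστ.lt_or_gt with h | h
    · exact h
    · exact absurd (nst L h0.1 h1.2 P0.hAB (P1.hBs.trans P1.hst) h) not_false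
  have s2 : L.pos σ1 < L.pos τ0 := by
    rcases nτσ.lt_or_gt with h | h
    · exact absurd (cx L h0.2 h1.1 P0.hAB (P0.hBs.trans P0.hst) h) not_false
    · exact h
  have s3 : L.pos τ1 < L.pos τ0 := by
    rcases nττ.lt_or_gt with h | h
    · exact absurd (cx L h0.2 hT1 (P0.hAB.trans P1.hBs) s2 h) not_false
    · exact h
  have s4 : L.pos σ0 < L.pos σ1 := by
    rcases nσσ.lt_or_gt with h | h
    · exact h
    · exact absurd (cx L hT1 hT0 h s1 s3) not_false
  exact cx L h1.1 hT0 P0.hBs s4 s2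

lemma clashAA (L : GcMixedLayout) {σ0 τ0 σ1 τ1 v : GcV} {x0 x1 : Fin 3 → GcV}
    (P0 : PairW L σ0 τ0 x0) (P1 : PairW L σ1 τ1 x1)
    (hv0 : L.pos τ0 < L.pos v) (hv1 : L.pos τ1 < L.pos v)
    (hxv0 : ∀ j, L.pos (x0 j) ≠ L.pos v)
    (hσσ : L.pos σ0 < L.pos σ1)
    (nτσ : L.pos τ0 ≠ L.pos σ1) (nττ : L.pos τ0 ≠ L.pos τ1)
    (hAv : s(GcV.A, v) ∈ L.S) (hBv : s(GcV.B, v) ∈ L.Q)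
    (h0 : s(GcV.A, σ0) ∈ L.Q ∧ s(GcV.A, τ0) ∈ L.S)
    (h1 : s(GcV.A, σ1) ∈ L.Q ∧ s(GcV.A, τ1) ∈ L.S) : False := by
  have hT0 : s(σ0, τ0) ∈ L.S := inS L P0.eT fun hQ => nst L hBv hQ P0.hBs P0.hst hv0
  have hT1 : s(σ1, τ1) ∈ L.S := inS L P1.eT fun hQ => nst L hBv hQ P1.hBs P1.hst hv1
  have hd : L.pos τ0 < L.pos σ1 := by
    rcases nτσ.lt_or_gt with h | h
    · exact h
    · exfalso
      rcases nττ.lt_or_gt with h' | h'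
      · exact cx L hT0 hT1 hσσ h h'
      · exact cx L h1.2 hT0 (P0.hAB.trans P0.hBs) (hσσ.trans P1.hst) h'
  have hBs0 : s(GcV.B, σ0) ∈ L.S := inS L P0.eBs fun hQ =>
    nst L h1.1 hQ P0.hAB P0.hBs hσσ
  have hBt0 : s(GcV.B, τ0) ∈ L.S := inS L P0.eBt fun hQ =>
    nst L h1.1 hQ P0.hAB (P0.hBs.trans P0.hst) hd
  have hreg : ∀ j, (L.pos σ0 < L.pos (x0 j) ∧ L.pos (x0 j) < L.pos τ0) ∨
      L.pos v < L.pos (x0 j) := by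
    intro j
    rcases region6 P0.hAB P0.hBs P0.hst hv0 (P0.xA j) (P0.xB j) (P0.xS j) (P0.xT j) (hxv0 j)
      with h | h | h | h | h | h
    · exfalso
      have hAB := P0.hAB; have hBσ := P0.hBs; have hστ := P0.hst
      have htx : s(x0 j, τ0) ∈ L.Q := inQ L (sw (P0.etx j)) fun hS =>
        cx L hS hAv (by omega) (by omega) (by omega)
      exact nst L htx h0.1 (by omega) (by omega) (by omega)
    · exfalso
      obtain ⟨h5, h6⟩ := h
      have hAB := P0.hAB; have hBσ := P0.hBs; have hστ := P0.hst
      have hsx : s(x0 j, σ0) ∈ L.S := inS L (sw (P0.esx j)) fun hQ =>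
        nst L h1.1 hQ (by omega) (by omega) (by omega)
      exact cx L hsx hBt0 (by omega) (by omega) (by omega)
    · exfalso
      obtain ⟨h5, h6⟩ := h
      have hAB := P0.hAB; have hBσ := P0.hBs; have hστ := P0.hst
      have htx : s(x0 j, τ0) ∈ L.S := inS L (sw (P0.etx j)) fun hQ =>
        nst L hBv hQ (by omega) (by omega) (by omega)
      exact cx L hBs0 htx (by omega) (by omega) (by omega)
    · exact Or.inl h
    · exfalso
      obtain ⟨h5, h6⟩ := h
      have hAB := P0.hAB; have hBσ := P0.hBs; have hστ := P0.hst
      have hsx : s(σ0, x0 j) ∈ L.S := inS L (P0.esx j) fun hQ =>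
        nst L hBv hQ (by omega) (by omega) (by omega)
      exact cx L h0.2 hsx (by omega) (by omega) (by omega)
    · exact Or.inr h
  have hAB := P0.hAB; have hBσ := P0.hBs; have hστ := P0.hst
  refine pigeon3 hreg ?_ ?_
  · intro j k hjk hj hk
    have key : ∀ j k : Fin 3, L.pos (x0 j) < L.pos (x0 k) →
        (L.pos σ0 < L.pos (x0 j) ∧ L.pos (x0 j) < L.pos τ0) →
        (L.pos σ0 < L.pos (x0 k) ∧ L.pos (x0 k) < L.pos τ0) → False := by
      intro j k hlt hj hk
      have ha : s(σ0, x0 k) ∈ L.S := inS L (P0.esx k) fun hQ =>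
        nst L hBv hQ (by omega) (by omega) (by omega)
      have hb : s(x0 j, τ0) ∈ L.S := inS L (sw (P0.etx j)) fun hQ =>
        nst L hBv hQ (by omega) (by omega) (by omega)
      exact cx L ha hb (by omega) (by omega) (by omega)
    rcases (P0.xx j k hjk).lt_or_gt with h | h
    · exact key j k h hj hk
    · exact key k j h hk hj
  · intro j k hjk hj hk
    have key : ∀ j k : Fin 3, L.pos (x0 j) < L.pos (x0 k) →
        L.pos v < L.pos (x0 j) → L.pos v < L.pos (x0 k) → False := by
      intro j k hlt hj hk
      have ha : s(τ0, x0 j) ∈ L.Q := inQ L (P0.etx j) fun hS =>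
        cx L hAv hS (by omega) (by omega) (by omega)
      have hb : s(σ0, x0 k) ∈ L.Q := inQ L (P0.esx k) fun hS =>
        cx L hAv hS (by omega) (by omega) (by omega)
      exact nst L hb ha (by omega) (by omega) (by omega)
    rcases (P0.xx j k hjk).lt_or_gt with h | h
    · exact key j k h hj hk
    · exact key k j h hk hj

lemma clashBB (L : GcMixedLayout) {σ0 τ0 σ1 τ1 v : GcV} {x0 x1 : Fin 3 → GcV}
    (P0 : PairW L σ0 τ0 x0) (P1 : PairW L σ1 τ1 x1)
    (hv0 : L.pos τ0 < L.pos v) (hv1 : L.pos τ1 < L.pos v)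
    (hxv1 : ∀ j, L.pos (x1 j) ≠ L.pos v)
    (hσσ : L.pos σ0 < L.pos σ1)
    (nτσ : L.pos τ0 ≠ L.pos σ1)
    (hAv : s(GcV.A, v) ∈ L.S) (hBv : s(GcV.B, v) ∈ L.Q)
    (h0 : s(GcV.B, σ0) ∈ L.S ∧ s(GcV.B, τ0) ∈ L.Q)
    (h1 : s(GcV.B, σ1) ∈ L.S ∧ s(GcV.B, τ1) ∈ L.Q) : False := by
  have hT0 : s(σ0, τ0) ∈ L.S := inS L P0.eT fun hQ => nst L hBv hQ P0.hBs P0.hst hv0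
  have hd : L.pos τ0 < L.pos σ1 := by
    rcases nτσ.lt_or_gt with h | h
    · exact h
    · exact absurd (cx L h1.1 hT0 P0.hBs hσσ h) not_false
  have hAt1 : s(GcV.A, τ1) ∈ L.S := inS L P1.eAt fun hQ =>
    nst L hQ h0.2 P0.hAB (P0.hBs.trans P0.hst) (hd.trans P1.hst)
  have hAs1 : s(GcV.A, σ1) ∈ L.S := inS L P1.eAs fun hQ =>
    nst L hQ h0.2 P0.hAB (P0.hBs.trans P0.hst) hd
  have hreg : ∀ j, (L.pos σ1 < L.pos (x1 j) ∧ L.pos (x1 j) < L.pos τ1) ∨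
      L.pos v < L.pos (x1 j) := by
    intro j
    rcases region6 P1.hAB P1.hBs P1.hst hv1 (P1.xA j) (P1.xB j) (P1.xS j) (P1.xT j) (hxv1 j)
      with h | h | h | h | h | h
    · exfalso
      have hAB := P1.hAB; have hBσ := P1.hBs; have hστ := P1.hst
      have hτ0 : L.pos GcV.B < L.pos τ0 := P0.hBs.trans P0.hst
      have htx : s(x1 j, τ1) ∈ L.Q := inQ L (sw (P1.etx j)) fun hS =>
        cx L hS hAv (by omega) (by omega) (by omega)
      exact nst L htx h0.2 (by omega) (by omega) (by omega)
    · exfalso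
      obtain ⟨h5, h6⟩ := h
      have hAB := P1.hAB; have hBσ := P1.hBs; have hστ := P1.hst
      have hτ0 : L.pos GcV.B < L.pos τ0 := P0.hBs.trans P0.hst
      have hτ0σ1 := hd
      have htx : s(x1 j, τ1) ∈ L.S := inS L (sw (P1.etx j)) fun hQ =>
        nst L hQ h0.2 (by omega) (by omega) (by omega)
      exact cx L hAs1 htx (by omega) (by omega) (by omega)
    · exfalso
      obtain ⟨h5, h6⟩ := h
      have hAB := P1.hAB; have hBσ := P1.hBs; have hστ := P1.hst
      have htx : s(x1 j, τ1) ∈ L.S := inS L (sw (P1.etx j)) fun hQ =>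
        nst L hBv hQ (by omega) (by omega) (by omega)
      exact cx L h1.1 htx (by omega) (by omega) (by omega)
    · exact Or.inl h
    · exfalso
      obtain ⟨h5, h6⟩ := h
      have hAB := P1.hAB; have hBσ := P1.hBs; have hστ := P1.hst
      have hsx : s(σ1, x1 j) ∈ L.S := inS L (P1.esx j) fun hQ =>
        nst L hBv hQ (by omega) (by omega) (by omega)
      exact cx L hAt1 hsx (by omega) (by omega) (by omega)
    · exact Or.inr h
  have hAB := P1.hAB; have hBσ := P1.hBs; have hστ := P1.hst
  refine pigeon3 hreg ?_ ?_
  · intro j k hjk hj hk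
    have key : ∀ j k : Fin 3, L.pos (x1 j) < L.pos (x1 k) →
        (L.pos σ1 < L.pos (x1 j) ∧ L.pos (x1 j) < L.pos τ1) →
        (L.pos σ1 < L.pos (x1 k) ∧ L.pos (x1 k) < L.pos τ1) → False := by
      intro j k hlt hj hk
      have ha : s(σ1, x1 k) ∈ L.S := inS L (P1.esx k) fun hQ =>
        nst L hBv hQ (by omega) (by omega) (by omega)
      have hb : s(x1 j, τ1) ∈ L.S := inS L (sw (P1.etx j)) fun hQ =>
        nst L hBv hQ (by omega) (by omega) (by omega)
      exact cx L ha hb (by omega) (by omega) (by omega)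
    rcases (P1.xx j k hjk).lt_or_gt with h | h
    · exact key j k h hj hk
    · exact key k j h hk hj
  · intro j k hjk hj hk
    have key : ∀ j k : Fin 3, L.pos (x1 j) < L.pos (x1 k) →
        L.pos v < L.pos (x1 j) → L.pos v < L.pos (x1 k) → False := by
      intro j k hlt hj hk
      have ha : s(τ1, x1 j) ∈ L.Q := inQ L (P1.etx j) fun hS =>
        cx L hAv hS (by omega) (by omega) (by omega)
      have hb : s(σ1, x1 k) ∈ L.Q := inQ L (P1.esx k) fun hS =>
        cx L hAv hS (by omega) (by omega) (by omega)
      exact nst L hb ha (by omega) (by omega) (by omega)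
    rcases (P1.xx j k hjk).lt_or_gt with h | h
    · exact key j k h hj hk
    · exact key k j h hk hj

/-! ### Two covered pairs are impossible when (A,v) ∈ S and (B,v) ∈ Q -/

lemma L2 (L : GcMixedLayout) {σ0 τ0 σ1 τ1 v : GcV} {x0 x1 : Fin 3 → GcV}
    (P0 : PairW L σ0 τ0 x0) (P1 : PairW L σ1 τ1 x1)
    (hv0 : L.pos τ0 < L.pos v) (hv1 : L.pos τ1 < L.pos v)
    (hxv0 : ∀ j, L.pos (x0 j) ≠ L.pos v) (hxv1 : ∀ j, L.pos (x1 j) ≠ L.pos v)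
    (nσσ : L.pos σ0 ≠ L.pos σ1) (nστ : L.pos σ0 ≠ L.pos τ1)
    (nτσ : L.pos τ0 ≠ L.pos σ1) (nττ : L.pos τ0 ≠ L.pos τ1)
    (hAv : s(GcV.A, v) ∈ L.S) (hBv : s(GcV.B, v) ∈ L.Q) : False := by
  rcases typeCl L P0 hv0 hxv0 hAv hBv with h0 | h0 <;>
    rcases typeCl L P1 hv1 hxv1 hAv hBv with h1 | h1
  · rcases nσσ.lt_or_gt with h | h
    · exact clashAA L P0 P1 hv0 hv1 hxv0 h nτσ nττ hAv hBv h0 h1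
    · exact clashAA L P1 P0 hv1 hv0 hxv1 h nστ.symm nττ.symm hAv hBv h1 h0
  · exact clashAB L P0 P1 hv0 hv1 nσσ nστ nτσ nττ hBv h0 h1
  · exact clashAB L P1 P0 hv1 hv0 nσσ.symm nτσ.symm nστ.symm nττ.symm hBv h1 h0
  · rcases nσσ.lt_or_gt with h | h
    · exact clashBB L P0 P1 hv0 hv1 hxv1 h nτσ hAv hBv h0 h1
    · exact clashBB L P1 P0 hv1 hv0 hxv0 h nστ.symm hAv hBv h1 h0

/-! ### Canonical orientation of a twin pair and its connectors -/

/-- The twin of pair `i` that comes first in the layout. -/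
noncomputable def sg (L : GcMixedLayout) (i : Fin 19) : GcV :=
  if L.pos (GcV.s i) ≤ L.pos (GcV.t i) then GcV.s i else GcV.t i

/-- The twin of pair `i` that comes second in the layout. -/
noncomputable def tu (L : GcMixedLayout) (i : Fin 19) : GcV :=
  if L.pos (GcV.s i) ≤ L.pos (GcV.t i) then GcV.t i else GcV.s i

/-- Three of the connectors of pair `i`. -/
def cn (i : Fin 19) (j : Fin 3) : GcV := GcV.x i ⟨j.1, by omega⟩

lemma sg_or (L : GcMixedLayout) (i : Fin 19) :
    sg L i = GcV.s i ∧ tu L i = GcV.t i ∨ sg L i = GcV.t i ∧ tu L i = GcV.s i := by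
  by_cases h : L.pos (GcV.s i) ≤ L.pos (GcV.t i) <;> simp [sg, tu, h]

lemma sg_mem (L : GcMixedLayout) (i : Fin 19) : sg L i = GcV.s i ∨ sg L i = GcV.t i := by
  rcases sg_or L i with ⟨h, _⟩ | ⟨h, _⟩ <;> [exact Or.inl h; exact Or.inr h]

lemma tu_mem (L : GcMixedLayout) (i : Fin 19) : tu L i = GcV.s i ∨ tu L i = GcV.t i := by
  rcases sg_or L i with ⟨_, h⟩ | ⟨_, h⟩ <;> [exact Or.inr h; exact Or.inl h]

lemma st_pos (L : GcMixedLayout) (i : Fin 19) : L.pos (sg L i) < L.pos (tu L i) := by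
  have hne : L.pos (GcV.s i) ≠ L.pos (GcV.t i) := posNe L (fun h => GcV.noConfusion h)
  by_cases h : L.pos (GcV.s i) ≤ L.pos (GcV.t i) <;> simp [sg, tu, h] <;> omega

/-- Twins of distinct pairs occupy distinct positions. -/
lemma tw_ne (L : GcMixedLayout) {i k : Fin 19} (hik : i ≠ k) {u w : GcV}
    (hu : u = GcV.s i ∨ u = GcV.t i) (hw : w = GcV.s k ∨ w = GcV.t k) :
    L.pos u ≠ L.pos w := by
  apply posNe
  rcases hu with rfl | rfl <;> rcases hw with rfl | rfl <;> intro h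
  · exact hik (by injection h)
  · exact GcV.noConfusion h
  · exact GcV.noConfusion h
  · exact hik (by injection h)

lemma cn_ne_tw (L : GcMixedLayout) (i k : Fin 19) (j : Fin 3) {w : GcV}
    (hw : w = GcV.s k ∨ w = GcV.t k) : L.pos (cn i j) ≠ L.pos w := by
  apply posNe
  rcases hw with rfl | rfl <;> exact fun h => GcV.noConfusion h

lemma mkPW (L : GcMixedLayout) (i : Fin 19) (hAB : L.pos GcV.A < L.pos GcV.B)
    (hs : L.pos GcV.B < L.pos (GcV.s i)) (ht : L.pos GcV.B < L.pos (GcV.t i)) :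
    PairW L (sg L i) (tu L i) (cn i) := by
  have hxA : ∀ j : Fin 3, L.pos (cn i j) ≠ L.pos GcV.A :=
    fun j => posNe L (fun h => GcV.noConfusion h)
  have hxB : ∀ j : Fin 3, L.pos (cn i j) ≠ L.pos GcV.B :=
    fun j => posNe L (fun h => GcV.noConfusion h)
  have hxx : ∀ j k : Fin 3, j ≠ k → L.pos (cn i j) ≠ L.pos (cn i k) := by
    intro j k hjk
    apply posNe
    intro h
    injection h with h1 h2
    simp only [Fin.mk.injEq] at h2
    exact hjk (Fin.ext h2)
  have hxs : ∀ j : Fin 3, L.pos (cn i j) ≠ L.pos (sg L i) :=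
    fun j => cn_ne_tw L i i j (sg_mem L i)
  have hxt : ∀ j : Fin 3, L.pos (cn i j) ≠ L.pos (tu L i) :=
    fun j => cn_ne_tw L i i j (tu_mem L i)
  have hst := st_pos L i
  rcases sg_or L i with ⟨h1, h2⟩ | ⟨h1, h2⟩ <;> simp only [h1, h2] at hst hxs hxt ⊢
  · exact ⟨⟨i, Or.inl rfl⟩,
      ⟨i, Or.inr (Or.inl rfl)⟩, ⟨i, Or.inr (Or.inr (Or.inl rfl))⟩,
      ⟨i, Or.inr (Or.inr (Or.inr (Or.inl rfl)))⟩,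
      ⟨i, Or.inr (Or.inr (Or.inr (Or.inr (Or.inl rfl))))⟩,
      fun j => ⟨i, Or.inr (Or.inr (Or.inr (Or.inr (Or.inr ⟨⟨j.1, by omega⟩, Or.inl rfl⟩))))⟩,
      fun j => ⟨i, Or.inr (Or.inr (Or.inr (Or.inr (Or.inr ⟨⟨j.1, by omega⟩, Or.inr rfl⟩))))⟩,
      hAB, hs, hst, hxA, hxB, hxs, hxt, hxx⟩
  · exact ⟨sw ⟨i, Or.inl rfl⟩,
      ⟨i, Or.inr (Or.inr (Or.inl rfl))⟩, ⟨i, Or.inr (Or.inl rfl)⟩,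
      ⟨i, Or.inr (Or.inr (Or.inr (Or.inr (Or.inl rfl))))⟩,
      ⟨i, Or.inr (Or.inr (Or.inr (Or.inl rfl)))⟩,
      fun j => ⟨i, Or.inr (Or.inr (Or.inr (Or.inr (Or.inr ⟨⟨j.1, by omega⟩, Or.inr rfl⟩))))⟩,
      fun j => ⟨i, Or.inr (Or.inr (Or.inr (Or.inr (Or.inr ⟨⟨j.1, by omega⟩, Or.inl rfl⟩))))⟩,
      hAB, ht, hst, hxA, hxB, hxs, hxt, hxx⟩

/-! ### The final contradiction for four sorted pairs -/

lemma final (L : GcMixedLayout) (l j k m : Fin 19)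
    (hAB : L.pos GcV.A < L.pos GcV.B)
    (hp : ∀ i : Fin 19, i = l ∨ i = j ∨ i = k ∨ i = m →
      L.pos GcV.B < L.pos (GcV.s i) ∧ L.pos GcV.B < L.pos (GcV.t i))
    (h1 : L.pos (tu L l) < L.pos (tu L j))
    (h2 : L.pos (tu L j) < L.pos (tu L k))
    (h3 : L.pos (tu L k) < L.pos (tu L m)) : False := by
  have hlj : l ≠ j := by rintro rfl; exact lt_irrefl _ h1
  have hlm : l ≠ m := by rintro rfl; exact lt_irrefl _ (h1.trans (h2.trans h3))
  have hjm : j ≠ m := by rintro rfl; exact lt_irrefl _ (h2.trans h3)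
  have hkm : k ≠ m := by rintro rfl; exact lt_irrefl _ h3
  have Pl := mkPW L l hAB (hp l (Or.inl rfl)).1 (hp l (Or.inl rfl)).2
  have Pj := mkPW L j hAB (hp j (Or.inr (Or.inl rfl))).1 (hp j (Or.inr (Or.inl rfl))).2
  have Pk := mkPW L k hAB (hp k (Or.inr (Or.inr (Or.inl rfl)))).1
    (hp k (Or.inr (Or.inr (Or.inl rfl)))).2
  have Pm := mkPW L m hAB (hp m (Or.inr (Or.inr (Or.inr rfl)))).1
    (hp m (Or.inr (Or.inr (Or.inr rfl)))).2
  have hBτj : L.pos GcV.B < L.pos (tu L j) := Pj.hBs.trans Pj.hst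
  have hBτk : L.pos GcV.B < L.pos (tu L k) := Pk.hBs.trans Pk.hst
  rcases memSQ L Pm.eAt with hAp | hAp
  · rcases memSQ L Pm.eBt with hBp | hBp
    · -- (A,p) ∈ S, (B,p) ∈ S
      have hαj : s(GcV.A, tu L j) ∈ L.Q := inQ L Pj.eAt fun hS =>
        cx L hS hBp hAB hBτj (h2.trans h3)
      have hαk : s(GcV.A, tu L k) ∈ L.Q := inQ L Pk.eAt fun hS =>
        cx L hS hBp hAB hBτk h3
      have hβj : s(GcV.B, tu L j) ∈ L.Q := inQ L Pj.eBt fun hS =>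
        Lstar L Pl h1 (fun jj => cn_ne_tw L l j jj (tu_mem L j)) hαj hS
      exact nst L hαk hβj hAB hBτj h2
    · -- (A,p) ∈ S, (B,p) ∈ Q : two covered pairs l, j
      exact L2 L Pl Pj (h1.trans (h2.trans h3)) (h2.trans h3)
        (fun jj => cn_ne_tw L l m jj (tu_mem L m))
        (fun jj => cn_ne_tw L j m jj (tu_mem L m))
        (tw_ne L hlj (sg_mem L l) (sg_mem L j))
        (tw_ne L hlj (sg_mem L l) (tu_mem L j))
        (tw_ne L hlj (tu_mem L l) (sg_mem L j))
        (tw_ne L hlj (tu_mem L l) (tu_mem L j))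
        hAp hBp
  · -- (A,p) ∈ Q
    have hBp : s(GcV.B, tu L m) ∈ L.Q := inQ L Pm.eBt fun hS =>
      Lstar L Pk h3 (fun jj => cn_ne_tw L k m jj (tu_mem L m)) hAp hS
    have hβk : s(GcV.B, tu L k) ∈ L.S := inS L Pk.eBt fun hQ =>
      nst L hAp hQ hAB hBτk h3
    have hαj : s(GcV.A, tu L j) ∈ L.Q := inQ L Pj.eAt fun hS =>
      cx L hS hβk hAB hBτj h2
    have hβj : s(GcV.B, tu L j) ∈ L.S := inS L Pj.eBt fun hQ =>
      nst L hAp hQ hAB hBτj (h2.trans h3)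
    exact Lstar L Pl h1 (fun jj => cn_ne_tw L l j jj (tu_mem L j)) hαj hβj

end GcAux

/-- No mixed layout of `G_c` contains four distinct twin pairs
(with names within each pair exchanged so the smaller twin comes first) all
realizing the ordering pattern `A < B < s < t`. -/
theorem Gc_case_ABst (L : GcMixedLayout) (i₁ i₂ i₃ i₄ : Fin 19)
    (hne : i₁ ≠ i₂ ∧ i₁ ≠ i₃ ∧ i₁ ≠ i₄ ∧ i₂ ≠ i₃ ∧ i₂ ≠ i₄ ∧ i₃ ≠ i₄)
    (hpat : ∀ i ∈ ({i₁, i₂, i₃, i₄} : Set (Fin 19)),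
      L.pos GcV.A < L.pos GcV.B ∧ L.pos GcV.B < min (L.pos (GcV.s i)) (L.pos (GcV.t i))) :
    False := by
  obtain ⟨h12, h13, h14, h23, h24, h34⟩ := hne
  have hAB : L.pos GcV.A < L.pos GcV.B := (hpat i₁ (by simp)).1
  have hp : ∀ i : Fin 19, i = i₁ ∨ i = i₂ ∨ i = i₃ ∨ i = i₄ →
      L.pos GcV.B < L.pos (GcV.s i) ∧ L.pos GcV.B < L.pos (GcV.t i) := by
    intro i hi
    have hm : i ∈ ({i₁, i₂, i₃, i₄} : Set (Fin 19)) := by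
      rcases hi with rfl | rfl | rfl | rfl <;> simp
    have h := (hpat i hm).2
    exact ⟨lt_of_lt_of_le h (min_le_left _ _), lt_of_lt_of_le h (min_le_right _ _)⟩
  have key : ∀ a b c d : Fin 19,
      (a = i₁ ∨ a = i₂ ∨ a = i₃ ∨ a = i₄) → (b = i₁ ∨ b = i₂ ∨ b = i₃ ∨ b = i₄) →
      (c = i₁ ∨ c = i₂ ∨ c = i₃ ∨ c = i₄) → (d = i₁ ∨ d = i₂ ∨ d = i₃ ∨ d = i₄) →
      L.pos (GcAux.tu L a) < L.pos (GcAux.tu L b) →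
      L.pos (GcAux.tu L b) < L.pos (GcAux.tu L c) →
      L.pos (GcAux.tu L c) < L.pos (GcAux.tu L d) → False := by
    intro a b c d ha hb hc hd o1 o2 o3
    refine GcAux.final L a b c d hAB (fun i hi => hp i ?_) o1 o2 o3
    rcases hi with rfl | rfl | rfl | rfl
    exacts [ha, hb, hc, hd]
  have n12 : L.pos (GcAux.tu L i₁) ≠ L.pos (GcAux.tu L i₂) := GcAux.tw_ne L h12 (GcAux.tu_mem L i₁) (GcAux.tu_mem L i₂)
  have n13 : L.pos (GcAux.tu L i₁) ≠ L.pos (GcAux.tu L i₃) := GcAux.tw_ne L h13 (GcAux.tu_mem L i₁) (GcAux.tu_mem L i₃)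
  have n14 : L.pos (GcAux.tu L i₁) ≠ L.pos (GcAux.tu L i₄) := GcAux.tw_ne L h14 (GcAux.tu_mem L i₁) (GcAux.tu_mem L i₄)
  have n23 : L.pos (GcAux.tu L i₂) ≠ L.pos (GcAux.tu L i₃) := GcAux.tw_ne L h23 (GcAux.tu_mem L i₂) (GcAux.tu_mem L i₃)
  have n24 : L.pos (GcAux.tu L i₂) ≠ L.pos (GcAux.tu L i₄) := GcAux.tw_ne L h24 (GcAux.tu_mem L i₂) (GcAux.tu_mem L i₄)
  have n34 : L.pos (GcAux.tu L i₃) ≠ L.pos (GcAux.tu L i₄) := GcAux.tw_ne L h34 (GcAux.tu_mem L i₃) (GcAux.tu_mem L i₄)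
  rcases n12.lt_or_gt with o12 | o12 <;> rcases n13.lt_or_gt with o13 | o13 <;>
    rcases n14.lt_or_gt with o14 | o14 <;> rcases n23.lt_or_gt with o23 | o23 <;>
    rcases n24.lt_or_gt with o24 | o24 <;> rcases n34.lt_or_gt with o34 | o34
  · exact key i₁ i₂ i₃ i₄ (Or.inl rfl) (Or.inr (Or.inl rfl)) (Or.inr (Or.inr (Or.inl rfl))) (Or.inr (Or.inr (Or.inr rfl))) (by omega) (by omega) (by omega)
  · exact key i₁ i₂ i₄ i₃ (Or.inl rfl) (Or.inr (Or.inl rfl)) (Or.inr (Or.inr (Or.inr rfl))) (Or.inr (Or.inr (Or.inl rfl))) (by omega) (by omega) (by omega)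
  · omega
  · exact key i₁ i₄ i₂ i₃ (Or.inl rfl) (Or.inr (Or.inr (Or.inr rfl))) (Or.inr (Or.inl rfl)) (Or.inr (Or.inr (Or.inl rfl))) (by omega) (by omega) (by omega)
  · exact key i₁ i₃ i₂ i₄ (Or.inl rfl) (Or.inr (Or.inr (Or.inl rfl))) (Or.inr (Or.inl rfl)) (Or.inr (Or.inr (Or.inr rfl))) (by omega) (by omega) (by omega)
  · omega
  · exact key i₁ i₃ i₄ i₂ (Or.inl rfl) (Or.inr (Or.inr (Or.inl rfl))) (Or.inr (Or.inr (Or.inr rfl))) (Or.inr (Or.inl rfl)) (by omega) (by omega) (by omega)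
  · exact key i₁ i₄ i₃ i₂ (Or.inl rfl) (Or.inr (Or.inr (Or.inr rfl))) (Or.inr (Or.inr (Or.inl rfl))) (Or.inr (Or.inl rfl)) (by omega) (by omega) (by omega)
  · omega
  · omega
  · omega
  · exact key i₄ i₁ i₂ i₃ (Or.inr (Or.inr (Or.inr rfl))) (Or.inl rfl) (Or.inr (Or.inl rfl)) (Or.inr (Or.inr (Or.inl rfl))) (by omega) (by omega) (by omega)
  · omega
  · omega
  · omega
  · exact key i₄ i₁ i₃ i₂ (Or.inr (Or.inr (Or.inr rfl))) (Or.inl rfl) (Or.inr (Or.inr (Or.inl rfl))) (Or.inr (Or.inl rfl)) (by omega) (by omega) (by omega)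
  · omega
  · omega
  · omega
  · omega
  · exact key i₃ i₁ i₂ i₄ (Or.inr (Or.inr (Or.inl rfl))) (Or.inl rfl) (Or.inr (Or.inl rfl)) (Or.inr (Or.inr (Or.inr rfl))) (by omega) (by omega) (by omega)
  · omega
  · exact key i₃ i₁ i₄ i₂ (Or.inr (Or.inr (Or.inl rfl))) (Or.inl rfl) (Or.inr (Or.inr (Or.inr rfl))) (Or.inr (Or.inl rfl)) (by omega) (by omega) (by omega)
  · omega
  · omega
  · omega
  · omega
  · omega
  · omega
  · omega
  · exact key i₃ i₄ i₁ i₂ (Or.inr (Or.inr (Or.inl rfl))) (Or.inr (Or.inr (Or.inr rfl))) (Or.inl rfl) (Or.inr (Or.inl rfl)) (by omega) (by omega) (by omega)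
  · exact key i₄ i₃ i₁ i₂ (Or.inr (Or.inr (Or.inr rfl))) (Or.inr (Or.inr (Or.inl rfl))) (Or.inl rfl) (Or.inr (Or.inl rfl)) (by omega) (by omega) (by omega)
  · exact key i₂ i₁ i₃ i₄ (Or.inr (Or.inl rfl)) (Or.inl rfl) (Or.inr (Or.inr (Or.inl rfl))) (Or.inr (Or.inr (Or.inr rfl))) (by omega) (by omega) (by omega)
  · exact key i₂ i₁ i₄ i₃ (Or.inr (Or.inl rfl)) (Or.inl rfl) (Or.inr (Or.inr (Or.inr rfl))) (Or.inr (Or.inr (Or.inl rfl))) (by omega) (by omega) (by omega)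
  · omega
  · omega
  · omega
  · omega
  · omega
  · omega
  · omega
  · exact key i₂ i₄ i₁ i₃ (Or.inr (Or.inl rfl)) (Or.inr (Or.inr (Or.inr rfl))) (Or.inl rfl) (Or.inr (Or.inr (Or.inl rfl))) (by omega) (by omega) (by omega)
  · omega
  · exact key i₄ i₂ i₁ i₃ (Or.inr (Or.inr (Or.inr rfl))) (Or.inr (Or.inl rfl)) (Or.inl rfl) (Or.inr (Or.inr (Or.inl rfl))) (by omega) (by omega) (by omega)
  · omega
  · omega
  · omega
  · omega
  · exact key i₂ i₃ i₁ i₄ (Or.inr (Or.inl rfl)) (Or.inr (Or.inr (Or.inl rfl))) (Or.inl rfl) (Or.inr (Or.inr (Or.inr rfl))) (by omega) (by omega) (by omega)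
  · omega
  · omega
  · omega
  · exact key i₃ i₂ i₁ i₄ (Or.inr (Or.inr (Or.inl rfl))) (Or.inr (Or.inl rfl)) (Or.inl rfl) (Or.inr (Or.inr (Or.inr rfl))) (by omega) (by omega) (by omega)
  · omega
  · omega
  · omega
  · exact key i₂ i₃ i₄ i₁ (Or.inr (Or.inl rfl)) (Or.inr (Or.inr (Or.inl rfl))) (Or.inr (Or.inr (Or.inr rfl))) (Or.inl rfl) (by omega) (by omega) (by omega)
  · exact key i₂ i₄ i₃ i₁ (Or.inr (Or.inl rfl)) (Or.inr (Or.inr (Or.inr rfl))) (Or.inr (Or.inr (Or.inl rfl))) (Or.inl rfl) (by omega) (by omega) (by omega)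
  · omega
  · exact key i₄ i₂ i₃ i₁ (Or.inr (Or.inr (Or.inr rfl))) (Or.inr (Or.inl rfl)) (Or.inr (Or.inr (Or.inl rfl))) (Or.inl rfl) (by omega) (by omega) (by omega)
  · exact key i₃ i₂ i₄ i₁ (Or.inr (Or.inr (Or.inl rfl))) (Or.inr (Or.inl rfl)) (Or.inr (Or.inr (Or.inr rfl))) (Or.inl rfl) (by omega) (by omega) (by omega)
  · omega
  · exact key i₃ i₄ i₂ i₁ (Or.inr (Or.inr (Or.inl rfl))) (Or.inr (Or.inr (Or.inr rfl))) (Or.inr (Or.inl rfl)) (Or.inl rfl) (by omega) (by omega) (by omega)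
  · exact key i₄ i₃ i₂ i₁ (Or.inr (Or.inr (Or.inr rfl))) (Or.inr (Or.inr (Or.inl rfl))) (Or.inr (Or.inl rfl)) (Or.inl rfl) (by omega) (by omega) (by omega)
end
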